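/- arXiv:2108.04882 — 9 statements merged into one kernel-verified Lean document; each statement's English description precedes it below -/
import Mathlib

section
/- Let F be a field and let V be an infinite-dimensional vector space over F. Then the Lie algebra End_F(V) of all F-linear endomorphisms of V, with bracket [f,g] = f∘g − g∘f, is perfect: every element of End_F(V) is a finite sum of commutators [f,g], i.e. End_F(V) = [End_F(V), End_F(V)]. -/
/-!
Since `V` has infinite dimension, `V ≅ ℕ →₀ V`. Under this identification the inclusion `j` of
the `0`-th summand and the projection `q` onto it satisfy `q j = 1`, so
`a = ⁅q, j a⁆ + j a q` for every endomorphism `a`. The remaining term `j a q` acts by `a` on the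
`0`-th summand only; it is the commutator of the left shift `t` with `s ∘ a`, where `s` is the
right shift and `a` acts coordinatewise, because `t s = 1` and `a - s a t` is exactly this corner.
-/

theorem lie_mul_add_mul_mul_of_mul_eq_one {R : Type*} [Ring R] {q j : R} (h : q * j = 1)
    (a : R) : ⁅q, j * a⁆ + j * a * q = a := by
  rw [Ring.lie_def, ← mul_assoc, h, one_mul, sub_add_cancel]

theorem lie_mul_of_mul_eq_one {R : Type*} [Ring R] {t s : R} (h : t * s = 1) (a : R) :
    ⁅t, s * a⁆ = a - s * a * t := by
  rw [Ring.lie_def, ← mul_assoc, h, one_mul, mul_assoc]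

theorem RingHom.map_lie {R S : Type*} [Ring R] [Ring S] (f : R →+* S) (x y : R) :
    f ⁅x, y⁆ = ⁅f x, f y⁆ := by
  simp only [Ring.lie_def, map_sub, map_mul]

namespace Finsupp

variable {R M : Type*} [Ring R] [AddCommGroup M] [Module R M]

theorem lcomapDomain_succ_mul_lmapDomain_succ :
    (lcomapDomain Nat.succ Nat.succ_injective : Module.End R (ℕ →₀ M)) *
      lmapDomain M R Nat.succ = 1 := by
  refine LinearMap.ext fun f => Finsupp.ext fun n => ?_
  simp [lcomapDomain, comapDomain_apply, mapDomain_apply Nat.succ_injective]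

theorem mapRange_sub_shift_eq_lsingle_comp (a : Module.End R M) :
    (mapRange.linearMap a : Module.End R (ℕ →₀ M)) -
        lmapDomain M R Nat.succ * mapRange.linearMap a *
          lcomapDomain Nat.succ Nat.succ_injective =
      lsingle 0 ∘ₗ a ∘ₗ lapply 0 := by
  refine LinearMap.ext fun f => Finsupp.ext fun n => ?_
  cases n with
  | zero =>
    have h0 : (0 : ℕ) ∉ Set.range Nat.succ := by simp
    simp [mapDomain_of_notMem_range _ _ h0]
  | succ m =>
    simp [lcomapDomain, comapDomain_apply, mapDomain_apply Nat.succ_injective]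

theorem lsingle_zero_comp_comp_lapply_zero_eq_lie (a : Module.End R M) :
    lsingle 0 ∘ₗ a ∘ₗ lapply 0 =
      ⁅(lcomapDomain Nat.succ Nat.succ_injective : Module.End R (ℕ →₀ M)),
        lmapDomain M R Nat.succ * mapRange.linearMap a⁆ := by
  rw [lie_mul_of_mul_eq_one lcomapDomain_succ_mul_lmapDomain_succ,
    mapRange_sub_shift_eq_lsingle_comp]

end Finsupp

theorem Module.nonempty_linearEquiv_finsupp_nat {R M : Type*} [Ring R] [StrongRankCondition R]
    [AddCommGroup M] [Module R M] [Module.Free R M] (hM : ¬ Module.Finite R M) :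
    Nonempty (M ≃ₗ[R] (ℕ →₀ M)) := by
  apply nonempty_linearEquiv_of_rank_eq
  rw [rank_finsupp, Cardinal.mk_nat, Cardinal.lift_aleph0, Cardinal.lift_uzero,
    Cardinal.aleph0_mul_eq]
  rwa [← not_lt, Module.rank_lt_aleph0_iff]

/-- For a field `F` and an infinite-dimensional vector space `V` over `F`,
the Lie algebra `End_F(V)` with bracket `⁅f,g⁆ = f ∘ g - g ∘ f` is perfect: every
endomorphism is a finite sum of commutators. -/
theorem stmt_0 (F : Type*) [Field F] (V : Type*) [AddCommGroup V] [Module F V]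
    (hV : ¬ Module.Finite F V) :
    AddSubgroup.closure {x : Module.End F V | ∃ f g : Module.End F V, x = ⁅f, g⁆} = ⊤ := by
  obtain ⟨e⟩ := Module.nonempty_linearEquiv_finsupp_nat hV
  rw [AddSubgroup.eq_top_iff']
  intro a
  let j : Module.End F V := e.symm.toLinearMap ∘ₗ Finsupp.lsingle 0
  let q : Module.End F V := Finsupp.lapply 0 ∘ₗ e.toLinearMap
  have hqj : q * j = 1 := by ext; simp [q, j]
  let φ : Module.End F (ℕ →₀ V) →+* Module.End F V := e.symm.conjRingEquiv
  have hcorner : j * a * q = φ (Finsupp.lsingle 0 ∘ₗ a ∘ₗ Finsupp.lapply 0) := rfl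
  rw [Finsupp.lsingle_zero_comp_comp_lapply_zero_eq_lie, RingHom.map_lie] at hcorner
  rw [← lie_mul_add_mul_mul_of_mul_eq_one hqj a, hcorner]
  exact add_mem (AddSubgroup.subset_closure ⟨_, _, rfl⟩) (AddSubgroup.subset_closure ⟨_, _, rfl⟩)
end

section
/- Let F be a field and let I be an infinite set. Then the Lie algebra M_rcf(I,F), with bracket [a,b] = ab − ba, is perfect: every matrix in M_rcf(I,F) is a finite sum of commutators [a,b] with a,b ∈ M_rcf(I,F), i.e. M_rcf(I,F) = [M_rcf(I,F), M_rcf(I,F)]. -/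
/-- The product of two `I × I` matrices, defined via `finsum`; it is well defined on
matrices having finitely many nonzero entries in each row and each column. -/
noncomputable def matMul {F I : Type*} [Field F] (a b : Matrix I I F) : Matrix I I F :=
  fun i j => ∑ᶠ k, a i k * b k j

/-- A matrix has finitely many nonzero entries in each row and in each column. -/
def IsRcf {F I : Type*} [Field F] (a : Matrix I I F) : Prop :=
  (∀ i, {j | a i j ≠ 0}.Finite) ∧ (∀ j, {i | a i j ≠ 0}.Finite)

section Aux

variable {F I : Type*} [Field F]

open Classical in
/-- The shift matrix on `I × ℕ`. -/
noncomputable def Smat (F I : Type*) [Field F] : Matrix (I × ℕ) (I × ℕ) F :=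
  fun p q => if p.1 = q.1 ∧ p.2 = q.2 + 1 then 1 else 0

/-- The auxiliary recursion for the commutator witness. -/
def Baux (A : Matrix (I × ℕ) (I × ℕ) F) (i j : I) : ℕ → ℕ → F
  | _, 0 => 0
  | 0, m + 1 => -A (i, 0) (j, m)
  | n + 1, m + 1 => -A (i, n + 1) (j, m) + Baux A i j n m

/-- The matrix `B` with `[S, B] = A`. -/
def Bmat (A : Matrix (I × ℕ) (I × ℕ) F) : Matrix (I × ℕ) (I × ℕ) F :=
  fun p q => Baux A p.1 q.1 p.2 q.2

lemma Baux_ne_zero {A : Matrix (I × ℕ) (I × ℕ) F} {i j : I} :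
    ∀ n m, Baux A i j n m ≠ 0 →
      ∃ k, k ≤ n ∧ k < m ∧ A (i, n - k) (j, m - 1 - k) ≠ 0 := by
  intro n
  induction n with
  | zero =>
    intro m h
    cases m with
    | zero => exact absurd rfl h
    | succ m =>
      refine ⟨0, le_rfl, Nat.succ_pos m, ?_⟩
      simpa using fun h0 => h (by simp [Baux, h0])
  | succ n ih =>
    intro m h
    cases m with
    | zero => exact absurd rfl h
    | succ m =>
      by_cases hA : A (i, n + 1) (j, m) = 0
      · have h' : Baux A i j n m ≠ 0 := by
          intro h0; exact h (by simp [Baux, hA, h0])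
        obtain ⟨k, hk1, hk2, hk3⟩ := ih m h'
        refine ⟨k + 1, Nat.succ_le_succ hk1, Nat.succ_lt_succ hk2, ?_⟩
        have e1 : n + 1 - (k + 1) = n - k := Nat.succ_sub_succ n k
        have e2 : m + 1 - 1 - (k + 1) = m - 1 - k := by omega
        rw [e1, e2]; exact hk3
      · exact ⟨0, Nat.zero_le _, Nat.succ_pos m, by simpa using hA⟩

lemma rcf_Bmat {A : Matrix (I × ℕ) (I × ℕ) F} (hA : IsRcf A) : IsRcf (Bmat A) := by
  constructor
  · rintro ⟨i, n⟩
    have hsub : {q | Bmat A (i, n) q ≠ 0} ⊆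
        ⋃ k ∈ Finset.range (n + 1),
          (fun q : I × ℕ => (q.1, q.2 + k + 1)) '' {q | A (i, n - k) q ≠ 0} := by
      rintro ⟨j, m⟩ h
      obtain ⟨k, hk1, hk2, hk3⟩ := Baux_ne_zero n m h
      refine Set.mem_biUnion (Finset.mem_range.2 (Nat.lt_succ_of_le hk1)) ?_
      exact ⟨(j, m - 1 - k), hk3, by simp; omega⟩
    refine Set.Finite.subset ?_ hsub
    exact Set.Finite.biUnion (Finset.range (n + 1)).finite_toSet
      fun k _ => ((hA.1 (i, n - k)).image _)
  · rintro ⟨j, m⟩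
    have hsub : {p | Bmat A p (j, m) ≠ 0} ⊆
        ⋃ k ∈ Finset.range m,
          (fun p : I × ℕ => (p.1, p.2 + k)) '' {p | A p (j, m - 1 - k) ≠ 0} := by
      rintro ⟨i, n⟩ h
      obtain ⟨k, hk1, hk2, hk3⟩ := Baux_ne_zero n m h
      refine Set.mem_biUnion (Finset.mem_range.2 hk2) ?_
      exact ⟨(i, n - k), hk3, by simp; omega⟩
    refine Set.Finite.subset ?_ hsub
    exact Set.Finite.biUnion (Finset.range m).finite_toSet
      fun k _ => ((hA.2 (j, m - 1 - k)).image _)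

lemma rcf_Smat : IsRcf (Smat F I) := by
  constructor
  · rintro ⟨i, n⟩
    refine Set.Finite.subset (Set.finite_singleton (i, n - 1)) ?_
    rintro ⟨j, m⟩ h
    simp only [Smat, ne_eq, ite_eq_right_iff, not_forall] at h
    obtain ⟨⟨h1, h2⟩, -⟩ := h
    simp only [Set.mem_singleton_iff, Prod.mk.injEq]
    exact ⟨h1.symm, by omega⟩
  · rintro ⟨j, m⟩
    refine Set.Finite.subset (Set.finite_singleton (j, m + 1)) ?_
    rintro ⟨i, n⟩ h
    simp only [Smat, ne_eq, ite_eq_right_iff, not_forall] at h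
    obtain ⟨⟨h1, h2⟩, -⟩ := h
    simp only [Set.mem_singleton_iff, Prod.mk.injEq]
    exact ⟨h1, h2⟩

lemma SB_apply (A : Matrix (I × ℕ) (I × ℕ) F) (i j : I) (n m : ℕ) :
    (∑ᶠ p : I × ℕ, Smat F I (i, n) p * Bmat A p (j, m)) =
      match n with
      | 0 => 0
      | n' + 1 => Baux A i j n' m := by
  cases n with
  | zero =>
    have : ∀ p : I × ℕ, Smat F I (i, 0) p * Bmat A p (j, m) = 0 := by
      rintro ⟨i', n'⟩
      have : Smat F I (i, 0) (i', n') = 0 := by simp [Smat]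
      simp [this]
    simp only [this]
    exact finsum_zero
  | succ n' =>
    have h := finsum_eq_single (fun p : I × ℕ => Smat F I (i, n' + 1) p * Bmat A p (j, m))
      (i, n') ?_
    · rw [h]
      have : Smat F I (i, n' + 1) (i, n') = 1 := by simp [Smat]
      simp [this, Bmat]
    · rintro ⟨i', k⟩ hne
      have : Smat F I (i, n' + 1) (i', k) = 0 := by
        simp only [Smat, ite_eq_right_iff]
        rintro ⟨h1, h2⟩
        exact absurd (by simp [h1]; omega : ((i' : I), k) = ((i : I), n')) hne
      simp [this]

lemma BS_apply (A : Matrix (I × ℕ) (I × ℕ) F) (i j : I) (n m : ℕ) :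
    (∑ᶠ p : I × ℕ, Bmat A (i, n) p * Smat F I p (j, m)) = Baux A i j n (m + 1) := by
  have h := finsum_eq_single (fun p : I × ℕ => Bmat A (i, n) p * Smat F I p (j, m))
    (j, m + 1) ?_
  · rw [h]
    have : Smat F I (j, m + 1) (j, m) = 1 := by simp [Smat]
    simp [this, Bmat]
  · rintro ⟨j', k⟩ hne
    have : Smat F I (j', k) (j, m) = 0 := by
      simp only [Smat, ite_eq_right_iff]
      rintro ⟨h1, h2⟩
      exact absurd (by simp [h1, h2] : ((j' : I), k) = ((j : I), m + 1)) hne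
    simp [this]

lemma key_identity (A : Matrix (I × ℕ) (I × ℕ) F) (i j : I) (n m : ℕ) :
    (∑ᶠ p : I × ℕ, Smat F I (i, n) p * Bmat A p (j, m)) -
      (∑ᶠ p : I × ℕ, Bmat A (i, n) p * Smat F I p (j, m)) = A (i, n) (j, m) := by
  rw [SB_apply, BS_apply]
  cases n with
  | zero => simp [Baux]
  | succ n' => simp [Baux]

end Aux

/-- For a field `F` and an infinite set `I`, the Lie algebra
`M_rcf(I,F)` is perfect: every row-and-column-finite matrix is a finite sum of
commutators `ab - ba` of row-and-column-finite matrices. -/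
theorem stmt_1 (F I : Type*) [Field F] [Infinite I] :
    ∀ a : Matrix I I F, IsRcf a →
      a ∈ AddSubgroup.closure
        {x : Matrix I I F | ∃ b c : Matrix I I F,
          IsRcf b ∧ IsRcf c ∧ x = matMul b c - matMul c b} := by
  intro a ha
  -- obtain an equivalence I ≃ I × ℕ
  obtain ⟨e⟩ : Nonempty (I ≃ I × ℕ) := by
    rw [← Cardinal.eq]
    simp [Cardinal.mk_prod, Cardinal.mk_mul_aleph0_eq]
  -- transport `a` to `I × ℕ`
  set A : Matrix (I × ℕ) (I × ℕ) F := fun p q => a (e.symm p) (e.symm q) with hAdef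
  have hA : IsRcf A := by
    constructor
    · intro p
      have : {q | A p q ≠ 0} = e '' {j | a (e.symm p) j ≠ 0} := by
        ext q
        constructor
        · intro h; exact ⟨e.symm q, h, e.apply_symm_apply q⟩
        · rintro ⟨j, hj, rfl⟩; simpa [hAdef] using hj
      rw [this]; exact (ha.1 _).image _
    · intro q
      have : {p | A p q ≠ 0} = e '' {i | a i (e.symm q) ≠ 0} := by
        ext p
        constructor
        · intro h; exact ⟨e.symm p, h, e.apply_symm_apply p⟩
        · rintro ⟨i, hi, rfl⟩; simpa [hAdef] using hi
      rw [this]; exact (ha.2 _).image _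
  -- the witnesses pulled back to `I`
  set b : Matrix I I F := fun i j => Smat F I (e i) (e j) with hbdef
  set c : Matrix I I F := fun i j => Bmat A (e i) (e j) with hcdef
  have hb : IsRcf b := by
    constructor
    · intro i
      have : {j | b i j ≠ 0} = e ⁻¹' {q | Smat F I (e i) q ≠ 0} := rfl
      rw [this]
      exact ((rcf_Smat (F := F) (I := I)).1 (e i)).preimage e.injective.injOn
    · intro j
      have : {i | b i j ≠ 0} = e ⁻¹' {p | Smat F I p (e j) ≠ 0} := rfl
      rw [this]
      exact ((rcf_Smat (F := F) (I := I)).2 (e j)).preimage e.injective.injOn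
  have hc : IsRcf c := by
    constructor
    · intro i
      have : {j | c i j ≠ 0} = e ⁻¹' {q | Bmat A (e i) q ≠ 0} := rfl
      rw [this]
      exact ((rcf_Bmat hA).1 (e i)).preimage e.injective.injOn
    · intro j
      have : {i | c i j ≠ 0} = e ⁻¹' {p | Bmat A p (e j) ≠ 0} := rfl
      rw [this]
      exact ((rcf_Bmat hA).2 (e j)).preimage e.injective.injOn
  have key : a = matMul b c - matMul c b := by
    funext i j
    have h1 : matMul b c i j = ∑ᶠ p : I × ℕ, Smat F I (e i) p * Bmat A p (e j) := by
      simp only [matMul, hbdef, hcdef]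
      exact finsum_comp_equiv e (f := fun p => Smat F I (e i) p * Bmat A p (e j))
    have h2 : matMul c b i j = ∑ᶠ p : I × ℕ, Bmat A (e i) p * Smat F I p (e j) := by
      simp only [matMul, hbdef, hcdef]
      exact finsum_comp_equiv e (f := fun p => Bmat A (e i) p * Smat F I p (e j))
    have h3 := key_identity A (e i).1 (e j).1 (e i).2 (e j).2
    simp only [Prod.mk.eta] at h3
    have : A (e i) (e j) = a i j := by simp [hAdef]
    rw [Matrix.sub_apply, h1, h2, h3, this]
  exact AddSubgroup.subset_closure ⟨b, c, hb, hc, key⟩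
end

section
/- Let F be a field with char F ≠ 2 and let I be an infinite set. Then the Lie algebra o_∞(I,F) of skew-symmetric finitary matrices is perfect: every element of o_∞(I,F) is a finite sum of commutators of elements of o_∞(I,F), i.e. o_∞(I,F) = [o_∞(I,F), o_∞(I,F)]. -/
/-!
For `i ≠ j` put `E(i,j,c) = c (e_{ij} - e_{ji})` (`skewSingle i j c`). Since `I` is infinite
there is an index `p ∉ {i, j}`, and then `[E(i,p,c), E(p,j,1)] = E(i,j,c)`, so every
`E(i,j,c)` is a commutator of finitary skew matrices. A finitary skew matrix `a` is the finite
sum of `E(i,j,a_{ij}/2)` over the support of `a`, because that sum is `(a - aᵀ)/2 = a`; this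
is where `char F ≠ 2` enters.
-/

open Matrix

/-- A finitary matrix: only finitely many nonzero entries. -/
def IsFinitary {F I : Type*} [Field F] (a : Matrix I I F) : Prop :=
  {p : I × I | a p.1 p.2 ≠ 0}.Finite

namespace SkewFinitary

variable {F I : Type*} [Field F]

variable (F I) in
def commutators : Set (Matrix I I F) :=
  {x : Matrix I I F | ∃ b c : Matrix I I F,
    IsFinitary b ∧ bᵀ = -b ∧ IsFinitary c ∧ cᵀ = -c ∧ x = matMul b c - matMul c b}

variable [DecidableEq I]

def skewSingle (i j : I) (c : F) : Matrix I I F :=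
  single i j c - single j i c

lemma skewSingle_apply (i j : I) (c : F) (x y : I) :
    skewSingle i j c x y = (if i = x ∧ j = y then c else 0) - if j = x ∧ i = y then c else 0 :=
  rfl

lemma skewSingle_self (i : I) (c : F) : skewSingle i i c = 0 :=
  sub_self _

lemma transpose_skewSingle (i j : I) (c : F) : (skewSingle i j c)ᵀ = -skewSingle i j c := by
  simp [skewSingle]

lemma isFinitary_skewSingle (i j : I) (c : F) : IsFinitary (skewSingle i j c) := by
  refine ((Set.finite_singleton (j, i)).insert (i, j)).subset fun ⟨x, y⟩ hxy => ?_
  by_contra hout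
  simp only [Set.mem_insert_iff, Set.mem_singleton_iff, Prod.mk.injEq, not_or] at hout
  exact hxy (by grind [skewSingle_apply])

lemma matMul_skewSingle_sub_matMul {i j p : I} (hij : i ≠ j) (hip : i ≠ p) (hjp : j ≠ p)
    (c : F) :
    matMul (skewSingle i p c) (skewSingle p j 1) - matMul (skewSingle p j 1) (skewSingle i p c) =
      skewSingle i j c := by
  ext x y
  -- as `i, j, p` are distinct, only the summation index `p` contributes to either product
  rw [Matrix.sub_apply, matMul, matMul, finsum_eq_single _ p, finsum_eq_single _ p] <;>
    grind [skewSingle_apply]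

lemma skewSingle_mem_closure_commutators [Infinite I] (i j : I) (c : F) :
    skewSingle i j c ∈ AddSubgroup.closure (commutators F I) := by
  obtain rfl | hij := eq_or_ne i j
  · rw [skewSingle_self]
    exact zero_mem _
  obtain ⟨p, hp⟩ := Infinite.exists_notMem_finset ({i, j} : Finset I)
  simp only [Finset.mem_insert, Finset.mem_singleton, not_or] at hp
  exact AddSubgroup.subset_closure ⟨_, _, isFinitary_skewSingle i p c,
    transpose_skewSingle i p c, isFinitary_skewSingle p j 1, transpose_skewSingle p j 1,
    (matMul_skewSingle_sub_matMul hij (Ne.symm hp.1) (Ne.symm hp.2) c).symm⟩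

lemma eq_sum_skewSingle {a : Matrix I I F} (hskew : aᵀ = -a) (htwo : (2 : F) ≠ 0)
    {s : Finset (I × I)} (hs : ∀ p : I × I, a p.1 p.2 ≠ 0 → p ∈ s) :
    a = ∑ p ∈ s, skewSingle p.1 p.2 (a p.1 p.2 / 2) := by
  ext x y
  have hyx : a y x = -a x y := by simpa using congr_fun₂ hskew x y
  have hsum (u v : I) : ∑ p ∈ s, single p.1 p.2 (a p.1 p.2 / 2) u v = a u v / 2 := by
    rw [Finset.sum_eq_single (u, v)]
    · simp
    · exact fun p _ hp => single_apply_of_ne _ _ _ _ _ fun h => hp (Prod.ext h.1 h.2)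
    · exact fun h => by simp [not_not.mp (mt (hs (u, v)) h)]
  have hsum' : ∑ p ∈ s, single p.2 p.1 (a p.1 p.2 / 2) x y = a y x / 2 := by
    simpa only [single_apply, and_comm] using hsum y x
  simp only [skewSingle, Matrix.sum_apply, Matrix.sub_apply, Finset.sum_sub_distrib, hsum, hsum',
    hyx]
  field_simp
  ring

end SkewFinitary

/-- For a field `F` with `char F ≠ 2` and an infinite set `I`, the Lie
algebra `o_∞(I,F)` of skew-symmetric finitary matrices is perfect: every finitary
skew-symmetric matrix is a finite sum of commutators of finitary skew-symmetric
matrices. -/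
theorem stmt_3 (F I : Type*) [Field F] [Infinite I] (hchar : ringChar F ≠ 2) :
    ∀ a : Matrix I I F, IsFinitary a → aᵀ = -a →
      a ∈ AddSubgroup.closure
        {x : Matrix I I F | ∃ b c : Matrix I I F,
          IsFinitary b ∧ bᵀ = -b ∧ IsFinitary c ∧ cᵀ = -c ∧
          x = matMul b c - matMul c b} := by
  classical
  intro a ha hskew
  rw [SkewFinitary.eq_sum_skewSingle hskew (Ring.two_ne_zero hchar) fun p hp =>
    (Set.Finite.mem_toFinset ha).2 hp]
  exact sum_mem fun p _ => SkewFinitary.skewSingle_mem_closure_commutators p.1 p.2 _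
end

section
/- Let F be a field and let I be an infinite set. Then for every derivation d of the algebra M_∞(I,F) there exists a matrix y ∈ M_rcf(I,F) such that d(a) = ya − ay for all a ∈ M_∞(I,F). -/
/-!
Write `E_kl` for the matrix units and fix an index `i₀`. Put `y i j = d(E_{j i₀}) i i₀`.
Applying the Leibniz rule to `E_{i₀i₀}² = E_{i₀i₀}`, to `E_{i₀l} E_{ji₀} = δ_{lj} E_{i₀i₀}` and
to `E_kl = E_{ki₀} E_{i₀l}`, and reading off one entry each time, gives `d(E_kl) = y E_kl - E_kl y`.
Every finitary matrix is a finite sum of multiples of matrix units, so `d = [y, -]` by linearity.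
Off the diagonal, the `i`-th row and column of `y` are, up to sign, the `i`-th row and column of
the finitary matrix `d(E_ii)`, so `y` is row- and column-finite.
-/

namespace IsFinitary

variable {F I : Type*} [Field F] {a b : Matrix I I F}

theorem row_finite (ha : IsFinitary a) (i : I) : {j | a i j ≠ 0}.Finite :=
  ha.preimage (Prod.mk_right_injective i).injOn

theorem col_finite (ha : IsFinitary a) (j : I) : {i | a i j ≠ 0}.Finite :=
  ha.preimage (Prod.mk_left_injective j).injOn

theorem of_subset {s : Set (I × I)} (hs : s.Finite) (h : ∀ p ∉ s, a p.1 p.2 = 0) :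
    IsFinitary a :=
  hs.subset fun p hp => by_contra fun hps => hp (h p hps)

theorem zero : IsFinitary (0 : Matrix I I F) :=
  of_subset Set.finite_empty fun _ _ => rfl

theorem add (ha : IsFinitary a) (hb : IsFinitary b) : IsFinitary (a + b) :=
  of_subset (ha.union hb) fun p hp => by
    simp only [Set.mem_union, Set.mem_ofPred_eq, not_or, not_not] at hp
    simp [hp.1, hp.2]

theorem single [DecidableEq I] (k l : I) (c : F) : IsFinitary (Matrix.single k l c) :=
  of_subset (Set.finite_singleton (k, l)) fun p hp => by
    rw [Matrix.single_apply, if_neg]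
    rintro ⟨rfl, rfl⟩
    exact hp rfl

theorem induction_on [DecidableEq I] {P : Matrix I I F → Prop} (h0 : P 0)
    (hadd : ∀ a b, IsFinitary a → IsFinitary b → P a → P b → P (a + b))
    (hsingle : ∀ k l c, P (Matrix.single k l c)) (ha : IsFinitary a) : P a := by
  suffices ∀ s : Finset (I × I), ∀ a : Matrix I I F, (∀ p ∉ s, a p.1 p.2 = 0) → P a from
    this ha.toFinset a fun p hp => by_contra fun h => hp (ha.mem_toFinset.mpr h)
  intro s
  induction s using Finset.induction_on with
  | empty =>
    intro a ha
    convert h0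
    ext i j
    exact ha (i, j) (Finset.notMem_empty _)
  | insert p s _ ih =>
    intro a ha
    set r := a - Matrix.single p.1 p.2 (a p.1 p.2)
    have hr : ∀ q ∉ s, r q.1 q.2 = 0 := by
      intro q hq
      by_cases hqp : q = p
      · subst hqp
        simp [r]
      · have hq' : ¬(p.1 = q.1 ∧ p.2 = q.2) := fun h => hqp (Prod.ext h.1.symm h.2.symm)
        simp [r, hq', ha q (by simp [hqp, hq])]
    have hsum : a = Matrix.single p.1 p.2 (a p.1 p.2) + r := by simp [r]
    rw [hsum]
    exact hadd _ _ (single _ _ _) (of_subset s.finite_toSet hr) (hsingle _ _ _) (ih r hr)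

end IsFinitary

section matMul

variable {F I : Type*} [Field F]

theorem matMul_add_right (y : Matrix I I F) {a b : Matrix I I F}
    (ha : ∀ j, {k | a k j ≠ 0}.Finite) (hb : ∀ j, {k | b k j ≠ 0}.Finite) :
    matMul y (a + b) = matMul y a + matMul y b := by
  ext i j
  simp only [matMul, Matrix.add_apply, mul_add]
  exact finsum_add_distrib ((ha j).subset fun k hk h => hk (by simp [h]))
    ((hb j).subset fun k hk h => hk (by simp [h]))

theorem matMul_add_left (y : Matrix I I F) {a b : Matrix I I F}
    (ha : ∀ i, {k | a i k ≠ 0}.Finite) (hb : ∀ i, {k | b i k ≠ 0}.Finite) :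
    matMul (a + b) y = matMul a y + matMul b y := by
  ext i j
  simp only [matMul, Matrix.add_apply, add_mul]
  exact finsum_add_distrib ((ha i).subset fun k hk h => hk (by simp [h]))
    ((hb i).subset fun k hk h => hk (by simp [h]))

variable [DecidableEq I]

theorem matMul_single_apply (a : Matrix I I F) (k l : I) (c : F) (i j : I) :
    matMul a (Matrix.single k l c) i j = if l = j then a i k * c else 0 := by
  rw [matMul, finsum_eq_single _ k fun m hm => by simp [Ne.symm hm]]
  by_cases h : l = j <;> simp [h]

theorem single_matMul_apply (b : Matrix I I F) (k l : I) (c : F) (i j : I) :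
    matMul (Matrix.single k l c) b i j = if k = i then c * b l j else 0 := by
  rw [matMul, finsum_eq_single _ l fun m hm => by simp [Ne.symm hm]]
  by_cases h : k = i <;> simp [h]

theorem single_matMul_single (k l m n : I) (c c' : F) :
    matMul (Matrix.single k l c) (Matrix.single m n c') =
      if l = m then Matrix.single k n (c * c') else 0 := by
  ext i j
  rw [single_matMul_apply]
  split_ifs with hki hlm hlm <;> simp [Matrix.single_apply, hki, hlm, eq_comm (a := m)]

end matMul

structure IsFinitaryDerivation {F I : Type*} [Field F] (d : Matrix I I F → Matrix I I F) :
    Prop where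
  map_finitary : ∀ a, IsFinitary a → IsFinitary (d a)
  map_add : ∀ a b, IsFinitary a → IsFinitary b → d (a + b) = d a + d b
  map_smul : ∀ (c : F) (a), IsFinitary a → d (c • a) = c • d a
  map_matMul : ∀ a b, IsFinitary a → IsFinitary b →
    d (matMul a b) = matMul (d a) b + matMul a (d b)

noncomputable def implementingMatrix {F I : Type*} [Field F] [DecidableEq I]
    (d : Matrix I I F → Matrix I I F) (i₀ : I) : Matrix I I F :=
  fun i j => d (Matrix.single j i₀ 1) i i₀

namespace IsFinitaryDerivation

variable {F I : Type*} [Field F] {d : Matrix I I F → Matrix I I F}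

theorem map_zero (hd : IsFinitaryDerivation d) : d 0 = 0 := by
  have h := hd.map_add 0 0 IsFinitary.zero IsFinitary.zero
  rwa [add_zero, left_eq_add] at h

variable [DecidableEq I]

theorem apply_matMul_single_single (hd : IsFinitaryDerivation d) (k l m n i j : I) :
    d (matMul (Matrix.single k l 1) (Matrix.single m n 1)) i j =
      (if n = j then d (Matrix.single k l 1) i m else 0) +
        if k = i then d (Matrix.single m n 1) l j else 0 := by
  rw [hd.map_matMul _ _ (.single _ _ _) (.single _ _ _), Matrix.add_apply,
    matMul_single_apply, single_matMul_apply, mul_one, one_mul]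

theorem apply_single_diag (hd : IsFinitaryDerivation d) (i₀ : I) :
    d (Matrix.single i₀ i₀ 1) i₀ i₀ = 0 := by
  have h := hd.apply_matMul_single_single i₀ i₀ i₀ i₀ i₀ i₀
  simp only [single_matMul_single, ↓reduceIte, mul_one] at h
  rwa [left_eq_add] at h

theorem apply_single_left_eq_neg (hd : IsFinitaryDerivation d) (i₀ l j : I) :
    d (Matrix.single i₀ l 1) i₀ j = -d (Matrix.single j i₀ 1) l i₀ := by
  have h := hd.apply_matMul_single_single i₀ l j i₀ i₀ i₀
  have hzero : d (matMul (Matrix.single i₀ l 1) (Matrix.single j i₀ 1)) i₀ i₀ = 0 := by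
    rw [single_matMul_single, mul_one]
    split_ifs
    · exact hd.apply_single_diag i₀
    · rw [hd.map_zero, Matrix.zero_apply]
  rw [hzero, if_pos rfl, if_pos rfl] at h
  exact eq_neg_of_add_eq_zero_left h.symm

theorem apply_single_one (hd : IsFinitaryDerivation d) (i₀ k l i j : I) :
    d (Matrix.single k l 1) i j =
      (if l = j then implementingMatrix d i₀ i k else 0) -
        if k = i then implementingMatrix d i₀ l j else 0 := by
  have h := hd.apply_matMul_single_single k i₀ i₀ l i j
  rw [single_matMul_single, if_pos rfl, mul_one, hd.apply_single_left_eq_neg] at h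
  rw [h]
  simp only [implementingMatrix]
  split_ifs <;> ring

theorem apply_single_eq_commutator (hd : IsFinitaryDerivation d) (i₀ k l : I) (c : F) :
    d (Matrix.single k l c) =
      matMul (implementingMatrix d i₀) (Matrix.single k l c) -
        matMul (Matrix.single k l c) (implementingMatrix d i₀) := by
  have hc : Matrix.single k l c = c • Matrix.single k l (1 : F) := by
    rw [Matrix.smul_single, smul_eq_mul, mul_one]
  ext i j
  rw [hc, hd.map_smul _ _ (.single _ _ _), ← hc, Matrix.smul_apply, Matrix.sub_apply,
    matMul_single_apply, single_matMul_apply, hd.apply_single_one i₀]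
  split_ifs <;> simp only [smul_eq_mul] <;> ring

theorem implementingMatrix_isRcf (hd : IsFinitaryDerivation d) (i₀ : I) :
    IsRcf (implementingMatrix d i₀) := by
  constructor
  · intro i
    refine (((hd.map_finitary _ (.single i i 1)).row_finite i).insert i).subset fun j hj => ?_
    rcases eq_or_ne i j with rfl | hij
    · exact Set.mem_insert _ _
    · refine Set.mem_insert_of_mem _ ?_
      simpa [hd.apply_single_one i₀, hij] using hj
  · intro j
    refine (((hd.map_finitary _ (.single j j 1)).col_finite j).insert j).subset fun i hi => ?_
    rcases eq_or_ne j i with rfl | hij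
    · exact Set.mem_insert _ _
    · refine Set.mem_insert_of_mem _ ?_
      simpa [hd.apply_single_one i₀, hij] using hi

theorem eq_commutator (hd : IsFinitaryDerivation d) (i₀ : I) {a : Matrix I I F}
    (ha : IsFinitary a) :
    d a = matMul (implementingMatrix d i₀) a - matMul a (implementingMatrix d i₀) := by
  set y := implementingMatrix d i₀
  refine ha.induction_on (P := fun a => d a = matMul y a - matMul a y) ?_
    (fun a b ha hb ha' hb' => ?_) (hd.apply_single_eq_commutator i₀)
  · rw [hd.map_zero]
    ext
    simp [matMul]
  · rw [hd.map_add _ _ ha hb, ha', hb', matMul_add_right y ha.col_finite hb.col_finite,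
      matMul_add_left y ha.row_finite hb.row_finite]
    abel

end IsFinitaryDerivation

theorem stmt_4_general (F I : Type*) [Field F]
    (d : Matrix I I F → Matrix I I F)
    (hmap : ∀ a, IsFinitary a → IsFinitary (d a))
    (hadd : ∀ a b, IsFinitary a → IsFinitary b → d (a + b) = d a + d b)
    (hsmul : ∀ (c : F) (a), IsFinitary a → d (c • a) = c • d a)
    (hmul : ∀ a b, IsFinitary a → IsFinitary b →
      d (matMul a b) = matMul (d a) b + matMul a (d b)) :
    ∃ y : Matrix I I F, IsRcf y ∧
      ∀ a, IsFinitary a → d a = matMul y a - matMul a y := by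
  classical
  rcases isEmpty_or_nonempty I with _ | ⟨⟨i₀⟩⟩
  · exact ⟨0, ⟨isEmptyElim, isEmptyElim⟩, fun _ _ => Subsingleton.elim _ _⟩
  · have hd : IsFinitaryDerivation d := ⟨hmap, hadd, hsmul, hmul⟩
    exact ⟨implementingMatrix d i₀, hd.implementingMatrix_isRcf i₀,
      fun _ => hd.eq_commutator i₀⟩

/-- Every derivation `d` of the associative algebra `M_∞(I,F)` of finitary
matrices is of the form `d(a) = y*a - a*y` for some `y ∈ M_rcf(I,F)`. -/
theorem stmt_4 (F I : Type*) [Field F] [Infinite I]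
    (d : Matrix I I F → Matrix I I F)
    (hmap : ∀ a, IsFinitary a → IsFinitary (d a))
    (hadd : ∀ a b, IsFinitary a → IsFinitary b → d (a + b) = d a + d b)
    (hsmul : ∀ (c : F) (a), IsFinitary a → d (c • a) = c • d a)
    (hmul : ∀ a b, IsFinitary a → IsFinitary b →
      d (matMul a b) = matMul (d a) b + matMul a (d b)) :
    ∃ y : Matrix I I F, IsRcf y ∧
      ∀ a, IsFinitary a → d a = matMul y a - matMul a y :=
  stmt_4_general F I d hmap hadd hsmul hmul
end

section
/- Let F be a field and let V be an infinite-dimensional vector space over F. Then for every derivation d of the algebra End_fin(V) of finite-rank endomorphisms of V there exists y ∈ End_F(V) such that d(a) = y∘a − a∘y for all a ∈ End_fin(V). -/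
/-!
Fix `v₀ ∈ V` and a functional `f` with `f v₀ = 1`, and write `x ⊗ f` for the rank-one map
`w ↦ f w • x`. Then `a (x ⊗ f) = (a x) ⊗ f`, so applying the Leibniz rule to `a (x ⊗ f)` and
evaluating at `v₀` gives `y (a x) = d(a) x + a (y x)` for the linear map `y x := d(x ⊗ f) v₀`,
i.e. `d(a) = y a - a y`.
-/

/-- An endomorphism has finite rank, i.e. finite-dimensional range. -/
def FinRank {F V : Type*} [Field F] [AddCommGroup V] [Module F V]
    (a : Module.End F V) : Prop :=
  Module.Finite F (LinearMap.range a)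

section RankOne

variable {F V : Type*} [Field F] [AddCommGroup V] [Module F V]

theorem finRank_smulRight (f : Module.Dual F V) (x : V) : FinRank (f.smulRight x) := by
  have hle : LinearMap.range (f.smulRight x) ≤ Submodule.span F {x} := by
    rintro _ ⟨w, rfl⟩
    exact Submodule.smul_mem _ _ (Submodule.mem_span_singleton_self x)
  exact Submodule.finiteDimensional_of_le hle

theorem mul_smulRight (a : Module.End F V) (f : Module.Dual F V) (x : V) :
    a * f.smulRight x = f.smulRight (a x) := by
  ext w
  simp

variable {d : Module.End F V → Module.End F V}

def derivationImplementer
    (hadd : ∀ a b, FinRank a → FinRank b → d (a + b) = d a + d b)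
    (hsmul : ∀ (c : F) (a), FinRank a → d (c • a) = c • d a)
    (f : Module.Dual F V) (v₀ : V) : Module.End F V where
  toFun x := d (f.smulRight x) v₀
  map_add' x x' := by
    rw [show f.smulRight (x + x') = f.smulRight x + f.smulRight x' from
      map_add (LinearMap.smulRightₗ f) x x',
      hadd _ _ (finRank_smulRight f x) (finRank_smulRight f x'), LinearMap.add_apply]
  map_smul' c x := by
    rw [show f.smulRight (c • x) = c • f.smulRight x from
      map_smul (LinearMap.smulRightₗ f) c x,
      hsmul c _ (finRank_smulRight f x), LinearMap.smul_apply, RingHom.id_apply]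

theorem eq_mul_sub_mul_derivationImplementer
    (hadd : ∀ a b, FinRank a → FinRank b → d (a + b) = d a + d b)
    (hsmul : ∀ (c : F) (a), FinRank a → d (c • a) = c • d a)
    (hmul : ∀ a b, FinRank a → FinRank b → d (a * b) = d a * b + a * d b)
    {f : Module.Dual F V} {v₀ : V} (hf : f v₀ = 1) {a : Module.End F V} (ha : FinRank a) :
    d a = derivationImplementer hadd hsmul f v₀ * a -
      a * derivationImplementer hadd hsmul f v₀ := by
  ext x
  have leibniz := congrArg (· v₀) (hmul a (f.smulRight x) ha (finRank_smulRight f x))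
  simp only [mul_smulRight, LinearMap.add_apply, Module.End.mul_apply,
    LinearMap.smulRight_apply, hf, one_smul] at leibniz
  simp only [LinearMap.sub_apply, Module.End.mul_apply]
  change d a x = d (f.smulRight (a x)) v₀ - a (d (f.smulRight x) v₀)
  rw [leibniz, add_sub_cancel_right]

end RankOne

theorem stmt_5_general (F V : Type*) [Field F] [AddCommGroup V] [Module F V]
    (d : Module.End F V → Module.End F V)
    (hadd : ∀ a b, FinRank a → FinRank b → d (a + b) = d a + d b)
    (hsmul : ∀ (c : F) (a), FinRank a → d (c • a) = c • d a)
    (hmul : ∀ a b, FinRank a → FinRank b → d (a * b) = d a * b + a * d b) :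
    ∃ y : Module.End F V, ∀ a, FinRank a → d a = y * a - a * y := by
  rcases subsingleton_or_nontrivial V with _ | _
  · exact ⟨0, fun _ _ => Subsingleton.elim _ _⟩
  obtain ⟨v₀, hv₀⟩ := exists_ne (0 : V)
  obtain ⟨f, hf⟩ := Module.Projective.exists_dual_eq_one F hv₀
  exact ⟨_, fun a ha => eq_mul_sub_mul_derivationImplementer hadd hsmul hmul hf ha⟩

/-- For an infinite-dimensional vector space `V` over a field `F`, every
derivation `d` of the algebra `End_fin(V)` of finite-rank endomorphisms is of the form
`d(a) = y ∘ a - a ∘ y` for some `y ∈ End_F(V)`. -/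
theorem stmt_5 (F V : Type*) [Field F] [AddCommGroup V] [Module F V]
    (hV : ¬ Module.Finite F V)
    (d : Module.End F V → Module.End F V)
    (hmap : ∀ a, FinRank a → FinRank (d a))
    (hadd : ∀ a b, FinRank a → FinRank b → d (a + b) = d a + d b)
    (hsmul : ∀ (c : F) (a), FinRank a → d (c • a) = c • d a)
    (hmul : ∀ a b, FinRank a → FinRank b → d (a * b) = d a * b + a * d b) :
    ∃ y : Module.End F V, ∀ a, FinRank a → d a = y * a - a * y :=
  stmt_5_general F V d hadd hsmul hmul
end

section
/- Let F be a field and let V be an infinite-dimensional vector space over F. Then every derivation of the algebra End_F(V) is inner: for every derivation d of End_F(V) there exists y ∈ End_F(V) such that d(a) = y∘a − a∘y for all a ∈ End_F(V). -/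
/-- For an infinite-dimensional vector space `V` over a field `F`, every
derivation of the associative algebra `End_F(V)` is inner. -/
theorem stmt_8 (F V : Type*) [Field F] [AddCommGroup V] [Module F V]
    (hV : ¬ Module.Finite F V)
    (d : Module.End F V →ₗ[F] Module.End F V)
    (hmul : ∀ a b : Module.End F V, d (a * b) = d a * b + a * d b) :
    ∃ y : Module.End F V, ∀ a, d a = y * a - a * y := by
  -- V is nontrivial
  obtain ⟨v₀, hv₀⟩ : ∃ v₀ : V, v₀ ≠ 0 := by
    by_contra h
    push_neg at h
    have : Subsingleton V := ⟨fun a b => by rw [h a, h b]⟩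
    exact hV inferInstance
  -- rank one idempotent onto span of v₀
  set p : Submodule F V := Submodule.span F {v₀} with hp
  obtain ⟨q, hq⟩ := Submodule.exists_isCompl p
  set pr := Submodule.linearProjOfIsCompl p q hq with hpr
  have hv₀p : v₀ ∈ p := Submodule.mem_span_singleton_self v₀
  set e : Module.End F V := p.subtype ∘ₗ pr with he
  have hev₀ : e v₀ = v₀ := by
    have : pr v₀ = ⟨v₀, hv₀p⟩ := Submodule.linearProjOfIsCompl_apply_left hq ⟨v₀, hv₀p⟩
    simp [he, this]
  have hrange : ∀ w : V, e w ∈ p := fun w => (pr w).2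
  -- functional with φ v₀ = 1
  set ψ := LinearEquiv.toSpanNonzeroSingleton F V v₀ hv₀ with hψ
  set φ : V →ₗ[F] F := (ψ.symm : p →ₗ[F] F) ∘ₗ pr with hφ
  have hφv₀ : φ v₀ = 1 := by
    have h1 : pr v₀ = ⟨v₀, hv₀p⟩ := Submodule.linearProjOfIsCompl_apply_left hq ⟨v₀, hv₀p⟩
    have h2 : ψ 1 = ⟨v₀, hv₀p⟩ := by
      apply Subtype.ext
      simp [hψ, LinearEquiv.toSpanNonzeroSingleton]
    show ψ.symm (pr v₀) = 1
    rw [h1, ← h2, LinearEquiv.symm_apply_apply]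
  set f : Module.End F V := d e with hf
  set T : V → Module.End F V := fun v => φ.smulRight v with hT
  have hTapp : ∀ v w, T v w = φ w • v := fun v w => rfl
  have hTv₀ : ∀ v, T v v₀ = v := by intro v; rw [hTapp, hφv₀, one_smul]
  have hTadd : ∀ v w, T (v + w) = T v + T w := by
    intro v w; ext x; simp [hTapp, smul_add]
  have hTsmul : ∀ (s : F) v, T (s • v) = s • T v := by
    intro s v; ext x; rw [hTapp, LinearMap.smul_apply, hTapp, smul_comm]
  -- key lemma: if c kills v₀ then d c v₀ = - c (f v₀)
  have hker : ∀ c : Module.End F V, c v₀ = 0 → d c v₀ = - c (f v₀) := by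
    intro c hc
    have hce : c * e = 0 := by
      ext w
      obtain ⟨s, hs⟩ := Submodule.mem_span_singleton.mp (hrange w)
      show c (e w) = 0
      rw [← hs, map_smul, hc, smul_zero]
    have h3 := hmul c e
    rw [hce, map_zero] at h3
    have h4 := congrArg (fun g : Module.End F V => g v₀) h3.symm
    simp only [LinearMap.zero_apply, LinearMap.add_apply,
      Module.End.mul_apply, hev₀, hf] at h4
    exact eq_neg_of_add_eq_zero_left h4

  -- the inner element
  set y : Module.End F V :=
    { toFun := fun v => d (T v) v₀ + φ (f v₀) • v
      map_add' := by
        intro v w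
        show d (T (v + w)) v₀ + φ (f v₀) • (v + w) = _
        rw [hTadd, map_add]
        simp only [LinearMap.add_apply, smul_add]
        abel
      map_smul' := by
        intro s v
        show d (T (s • v)) v₀ + φ (f v₀) • (s • v) = _
        rw [hTsmul, map_smul]
        simp only [LinearMap.smul_apply, RingHom.id_apply, smul_add]
        rw [smul_comm (φ (f v₀)) s v] } with hy
  refine ⟨y, fun a => ?_⟩
  ext v
  have hyapp : ∀ v, y v = d (T v) v₀ + φ (f v₀) • v := fun v => rfl
  show d a v = (y * a - a * y) v
  have hc : (T (a v) - a * T v) v₀ = 0 := by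
    simp only [LinearMap.sub_apply, Module.End.mul_apply, hTv₀]
    simp
  have h5 := hker _ hc
  have hc2 : (T (a v) - a * T v) (f v₀) = 0 := by
    simp only [LinearMap.sub_apply, Module.End.mul_apply, hTapp, map_smul]
    simp
  rw [hc2, neg_zero, map_sub, LinearMap.sub_apply, sub_eq_zero] at h5
  have h6 := hmul a (T v)
  calc d a v = d a (T v v₀) := by rw [hTv₀]
    _ = (y * a - a * y) v := by
        have h7 : y (a v) = d (T (a v)) v₀ + φ (f v₀) • (a v) := rfl
        rw [h5, h6] at h7
        simp only [LinearMap.sub_apply, Module.End.mul_apply,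
          LinearMap.add_apply] at h7 ⊢
        rw [h7, hyapp, map_add, map_smul]
        abel
end

section
/- Let F be a field with char F ≠ 2 and let V be an infinite-dimensional vector space over F. Then every derivation of the Lie algebra End_F(V)⁽⁻⁾ (End_F(V) with bracket [f,g] = f∘g − g∘f) is inner: for every Lie algebra derivation d there exists y ∈ End_F(V) such that d(a) = y∘a − a∘y for all a ∈ End_F(V). -/
attribute [local instance 100] LieRing.ofAssociativeRing

/-!
Write `δ(a, b) = D(ab) - D(a) b - a D(b)` for the Leibniz defect of a Lie derivation `D` of an
associative algebra `A`. The Lie rule says precisely that `δ` is symmetric, and `δ` satisfies the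
Hochschild cocycle identity. Suppose `A` has no `2`-torsion and contains `2 × 2` matrix units
`p, q, u, v` such that every element of `pAp` and of `qAq` is a commutator inside that corner.
After adding an inner derivation, `D p` commutes with `p`; then `D` preserves the Peirce spaces
`pAq` and `qAp` (eigenspaces of `ad p`) and `pAp`, `qAq` (elements of a corner are commutators
there), i.e. `D` commutes with multiplication by `p` and `q`. Consequently
`p δ(a, b) q = δ(pa, bq) = δ(bq, pa) = δ(b, qpa) = 0`, and the cocycle identity with `u` kills
`p δ(a, b) p`, so `D` is an associative derivation. Associative derivations of `End W` are inner,
as one sees by applying them to rank-one maps.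

For infinite-dimensional `V` we have `V ≃ (ℕ →₀ V) × (ℕ →₀ V)`, which provides the matrix units,
and every endomorphism of `ℕ →₀ V` is a commutator with the shift.
-/

section Peirce

variable {A : Type*} [Ring A] {p q : A}

theorem eq_peirce_sum (hpq : p + q = 1) (a : A) :
    a = p * a * p + p * a * q + q * a * p + q * a * q := by
  obtain rfl := eq_sub_of_add_eq' hpq
  noncomm_ring

def IsCommutatorCorner (p : A) : Prop :=
  ∀ a, ∃ b c, p * a * p = ⁅p * b * p, p * c * p⁆

namespace IsIdempotentElem

theorem lie_lie_lie (hp : IsIdempotentElem p) (x : A) : ⁅p, ⁅p, ⁅p, x⁆⁆⁆ = ⁅p, x⁆ := by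
  simp only [Ring.lie_def, mul_sub, sub_mul, mul_assoc, hp.eq, hp.mul_self_mul]
  abel

theorem lie_eq_zero_of_lie_lie_eq_zero (hp : IsIdempotentElem p) {x : A}
    (hx : ⁅p, ⁅p, x⁆⁆ = 0) : ⁅p, x⁆ = 0 := by
  linear_combination (norm := skip) p * hx - hx * p
  simp only [Ring.lie_def, mul_sub, sub_mul, mul_zero, zero_mul, mul_assoc, hp.eq,
    hp.mul_self_mul]
  abel

-- In Peirce components, `y - ⁅p, y⁆ = y₁₁ + 2 y₂₁ + y₂₂`.
theorem mul_mul_eq_of_eq_lie_add (hp : IsIdempotentElem p) (hpq : p + q = 1)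
    (htwo : ∀ x : A, x + x = 0 → x = 0) {w y : A} (hw : p * w * q = w)
    (hy : y = ⁅p, y⁆ + w) : p * y * q = y := by
  obtain rfl := eq_sub_of_add_eq' hpq
  have h₁₁ : p * y * p = 0 := by
    linear_combination (norm := skip) p * hy * p - p * hw * p
    simp only [Ring.lie_def, mul_add, add_mul, mul_sub, sub_mul, mul_one, mul_assoc,
      hp.eq, hp.mul_self_mul]
    abel
  have h₂₁ : (1 - p) * y * p = 0 := htwo _ <| by
    linear_combination (norm := skip) (1 - p) * hy * p - (1 - p) * hw * p
    simp only [Ring.lie_def, mul_add, add_mul, mul_sub, sub_mul, mul_one, one_mul, mul_assoc,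
      hp.eq, hp.mul_self_mul]
    abel
  have h₂₂ : (1 - p) * y * (1 - p) = 0 := by
    linear_combination (norm := skip) (1 - p) * hy * (1 - p) - (1 - p) * hw * (1 - p)
    simp only [Ring.lie_def, mul_add, add_mul, mul_sub, sub_mul, mul_one, one_mul, mul_assoc,
      hp.eq, hp.mul_self_mul]
    abel
  linear_combination (norm := noncomm_ring) -h₁₁ - h₂₁ - h₂₂

theorem mul_peirce_sum (hp : IsIdempotentElem p) (hpq : p + q = 1) {x₁₁ x₁₂ x₂₁ x₂₂ : A}
    (h₁₁ : p * x₁₁ * p = x₁₁) (h₁₂ : p * x₁₂ * q = x₁₂) (h₂₁ : q * x₂₁ * p = x₂₁)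
    (h₂₂ : q * x₂₂ * q = x₂₂) :
    p * (x₁₁ + x₁₂ + x₂₁ + x₂₂) = x₁₁ + x₁₂ ∧ (x₁₁ + x₁₂ + x₂₁ + x₂₂) * p = x₁₁ + x₂₁ := by
  rw [← h₁₁, ← h₁₂, ← h₂₁, ← h₂₂]
  obtain rfl := eq_sub_of_add_eq' hpq
  constructor <;>
  · simp only [mul_add, add_mul, mul_sub, sub_mul, mul_one, one_mul, mul_assoc, hp.eq,
      hp.mul_self_mul]
    abel

end IsIdempotentElem

end Peirce

/-- `p, q, u, v` behave like the matrix units `e₁₁, e₂₂, e₁₂, e₂₁` of a `2 × 2` matrix ring. -/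
structure IsMatrixUnits {A : Type*} [Ring A] (p q u v : A) : Prop where
  add_eq_one : p + q = 1
  mul_uv : u * v = p
  mul_vu : v * u = q
  mul_uq : u * q = u
  mul_vp : v * p = v

namespace IsMatrixUnits

variable {A : Type*} [Ring A] {p q u v : A}

theorem symm (h : IsMatrixUnits p q u v) : IsMatrixUnits q p v u :=
  ⟨by rw [add_comm, h.add_eq_one], h.mul_vu, h.mul_uv, h.mul_vp, h.mul_uq⟩

theorem isIdempotentElem (h : IsMatrixUnits p q u v) : IsIdempotentElem p := by
  rw [IsIdempotentElem, ← h.mul_uv, mul_assoc, ← mul_assoc v, h.mul_vu, ← mul_assoc, h.mul_uq]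

theorem mul_eq_zero (h : IsMatrixUnits p q u v) : p * q = 0 := by
  rw [eq_sub_of_add_eq' h.add_eq_one, h.isIdempotentElem.mul_one_sub_self]

end IsMatrixUnits

namespace LieDerivation

variable {R A : Type*} [CommRing R] [Ring A] [Algebra R A] (D : LieDerivation R A A) {p q e : A}

theorem lie_apply_one (a : A) : ⁅a, D 1⁆ = 0 := by
  simpa [Ring.lie_def] using (D.apply_lie_eq_add a 1).symm

theorem lie_apply_eq_zero_of_add_eq_one (hpq : p + q = 1) (hDp : ⁅p, D p⁆ = 0) :
    ⁅q, D q⁆ = 0 := by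
  obtain rfl := eq_sub_of_add_eq' hpq
  rw [map_sub, sub_lie, lie_sub, lie_sub, lie_apply_one, lie_apply_one, hDp]
  simp [Ring.lie_def]

theorem lie_apply_eq_zero_of_lie_eq_zero (hp : IsIdempotentElem p) (hDp : ⁅p, D p⁆ = 0)
    {x : A} (hx : ⁅p, x⁆ = 0) : ⁅p, D x⁆ = 0 := by
  have h := D.apply_lie_eq_add p x
  rw [hx, map_zero, eq_comm, add_eq_zero_iff_eq_neg] at h
  refine hp.lie_eq_zero_of_lie_lie_eq_zero ?_
  rw [h, lie_neg, leibniz_lie, hDp, hx, zero_lie, lie_zero, add_zero, neg_zero]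

theorem mul_apply_mul_offDiag (hp : IsIdempotentElem p) (hpq : p + q = 1)
    (htwo : ∀ x : A, x + x = 0 → x = 0) (hDp : ⁅p, D p⁆ = 0) (a : A) :
    p * D (p * a * q) * q = D (p * a * q) := by
  have hcomm := commute_iff_lie_eq.mpr hDp
  have hm : ⁅p, p * a * q⁆ = p * a * q := by
    obtain rfl := eq_sub_of_add_eq' hpq
    simp only [Ring.lie_def, mul_sub, sub_mul, mul_one, mul_assoc, hp.eq, hp.mul_self_mul]
    abel
  refine hp.mul_mul_eq_of_eq_lie_add hpq htwo (w := ⁅D p, p * a * q⁆) ?_ ?_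
  · obtain rfl := eq_sub_of_add_eq' hpq
    simp only [Ring.lie_def, mul_sub, sub_mul, mul_one, mul_assoc, hp.eq, hp.mul_self_mul,
      hcomm.eq, hcomm.left_comm]
    abel
  · conv_lhs => rw [← hm]
    exact D.apply_lie_eq_add p _

theorem mul_apply_mul_diag (hp : IsIdempotentElem p) (hDp : ⁅p, D p⁆ = 0)
    (hcp : IsCommutatorCorner p) (a : A) : p * D (p * a * p) * p = D (p * a * p) := by
  have hcomm : ⁅p, D (p * a * p)⁆ = 0 := by
    refine D.lie_apply_eq_zero_of_lie_eq_zero hp hDp ?_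
    simp only [Ring.lie_def, mul_assoc, hp.eq, hp.mul_self_mul, sub_self]
  have h₂₂ : (1 - p) * D (p * a * p) * (1 - p) = 0 := by
    obtain ⟨b, c, hbc⟩ := hcp a
    rw [hbc, D.apply_lie_eq_add]
    simp only [Ring.lie_def, mul_add, add_mul, mul_sub, sub_mul, mul_one, one_mul, mul_assoc,
      hp.eq, hp.mul_self_mul]
    abel
  linear_combination (norm := skip) -h₂₂ - p * hcomm + hcomm * p
  simp only [Ring.lie_def, mul_sub, sub_mul, mul_one, one_mul, mul_zero, zero_mul, mul_assoc,
    hp.eq, hp.mul_self_mul]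
  abel

def CommutesWithMul (e : A) : Prop :=
  ∀ a, D (e * a) = e * D a ∧ D (a * e) = D a * e

theorem CommutesWithMul.of_add_eq_one {D : LieDerivation R A A} (hpq : p + q = 1)
    (h : D.CommutesWithMul p) : D.CommutesWithMul q := by
  obtain rfl := eq_sub_of_add_eq' hpq
  intro a
  simp only [sub_mul, mul_sub, one_mul, mul_one, map_sub, (h a).1, (h a).2, and_self]

theorem commutesWithMul_of_lie_apply_eq_zero (hp : IsIdempotentElem p) (hpq : p + q = 1)
    (htwo : ∀ x : A, x + x = 0 → x = 0) (hDp : ⁅p, D p⁆ = 0) (hcp : IsCommutatorCorner p)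
    (hcq : IsCommutatorCorner q) : D.CommutesWithMul p := by
  have hqp : q + p = 1 := by rw [add_comm, hpq]
  have hq : IsIdempotentElem q := eq_sub_of_add_eq' hpq ▸ hp.one_sub
  have hDq := D.lie_apply_eq_zero_of_add_eq_one hpq hDp
  intro a
  have hsum : D a = D (p * a * p) + D (p * a * q) + D (q * a * p) + D (q * a * q) := by
    rw [← map_add, ← map_add, ← map_add, ← eq_peirce_sum hpq]
  have hmul := hp.mul_peirce_sum hpq (D.mul_apply_mul_diag hp hDp hcp a)
    (D.mul_apply_mul_offDiag hp hpq htwo hDp a) (D.mul_apply_mul_offDiag hq hqp htwo hDq a)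
    (D.mul_apply_mul_diag hq hDq hcq a)
  rw [hsum, hmul.1, hmul.2, ← map_add, ← map_add]
  obtain rfl := eq_sub_of_add_eq' hpq
  constructor <;> congr 1 <;> noncomm_ring

def leibnizDefect (a b : A) : A := D (a * b) - D a * b - a * D b

theorem leibnizDefect_comm (a b : A) : D.leibnizDefect a b = D.leibnizDefect b a := by
  have h := D.apply_lie_eq_add a b
  simp only [Ring.lie_def, map_sub] at h
  unfold leibnizDefect
  linear_combination (norm := noncomm_ring) h

theorem leibnizDefect_cocycle (a b c : A) :
    a * D.leibnizDefect b c - D.leibnizDefect (a * b) c + D.leibnizDefect a (b * c)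
      - D.leibnizDefect a b * c = 0 := by
  simp only [leibnizDefect, mul_assoc]
  noncomm_ring

theorem leibnizDefect_add_left (a a' b : A) :
    D.leibnizDefect (a + a') b = D.leibnizDefect a b + D.leibnizDefect a' b := by
  simp only [leibnizDefect, add_mul, map_add]
  abel

theorem leibnizDefect_add_inner (t : A) :
    (D + inner R A A t).leibnizDefect = D.leibnizDefect := by
  ext a b
  simp only [leibnizDefect, add_apply, inner_apply_apply, Ring.lie_def]
  noncomm_ring

theorem leibnizDefect_mul_left (h : D.CommutesWithMul e) (a b : A) :
    D.leibnizDefect (e * a) b = e * D.leibnizDefect a b := by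
  simp only [leibnizDefect, mul_sub, mul_assoc, (h _).1]

theorem leibnizDefect_mul_right (h : D.CommutesWithMul e) (a b : A) :
    D.leibnizDefect a (b * e) = D.leibnizDefect a b * e := by
  simp only [leibnizDefect, sub_mul, ← mul_assoc, (h _).2]

theorem leibnizDefect_mul_mid (h : D.CommutesWithMul e) (a b : A) :
    D.leibnizDefect (a * e) b = D.leibnizDefect a (e * b) := by
  simp only [leibnizDefect, mul_assoc, (h _).1, (h _).2]

theorem leibnizDefect_mul_right_eq_zero (h : D.CommutesWithMul e) {x : A} (hx : e * x = 0)
    (b : A) : D.leibnizDefect x (b * e) = 0 := by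
  rw [leibnizDefect_comm, D.leibnizDefect_mul_mid h, hx]
  simp [leibnizDefect]

theorem leibnizDefect_mul_mul_eq_zero (hp : IsIdempotentElem p) (hpq : p * q = 0)
    (hDp : D.CommutesWithMul p) (hDq : D.CommutesWithMul q) (a b : A) :
    D.leibnizDefect (p * a) (q * b) = 0 :=
  calc D.leibnizDefect (p * a) (q * b)
      = p * (p * D.leibnizDefect a (q * b)) := by
        rw [hp.mul_self_mul, D.leibnizDefect_mul_left hDp]
    _ = p * (q * D.leibnizDefect b (p * a)) := by
        rw [← D.leibnizDefect_mul_left hDp, ← D.leibnizDefect_mul_left hDq, leibnizDefect_comm]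
    _ = 0 := by rw [← mul_assoc, hpq, zero_mul]

theorem leibnizDefect_corner_eq_zero {u v : A} (h : IsMatrixUnits p q u v)
    (hDp : D.CommutesWithMul p) (hDq : D.CommutesWithMul q) (a b : A) :
    D.leibnizDefect (p * a * p) (p * b * p) = 0 := by
  have hqp : ∀ c, q * (p * c) = 0 := fun c => by rw [← mul_assoc, h.symm.mul_eq_zero, zero_mul]
  set x := p * a * p
  set y := p * b * p
  -- In the cocycle identity for `(x, y, u)` only `δ(x, y) u` survives: `δ` vanishes on `pA × Aq`.
  have hcoc := D.leibnizDefect_cocycle x y u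
  rw [← h.mul_uq, D.leibnizDefect_mul_right_eq_zero hDq (by simp only [y, mul_assoc, hqp]),
    D.leibnizDefect_mul_right_eq_zero hDq (by simp only [x, mul_assoc, hqp]), ← mul_assoc,
    D.leibnizDefect_mul_right_eq_zero hDq (by simp only [x, mul_assoc, hqp]), h.mul_uq] at hcoc
  have hu : D.leibnizDefect x y * u = 0 := by simpa using hcoc
  calc D.leibnizDefect x y = D.leibnizDefect x (y * p) := by
        rw [h.isIdempotentElem.mul_mul_self]
    _ = D.leibnizDefect x y * (u * v) := by rw [D.leibnizDefect_mul_right hDp, h.mul_uv]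
    _ = 0 := by rw [← mul_assoc, hu, zero_mul]

theorem mul_leibnizDefect_mul_eq_zero {u v : A} (h : IsMatrixUnits p q u v)
    (hDp : D.CommutesWithMul p) (hDq : D.CommutesWithMul q) (a b : A) :
    p * D.leibnizDefect a b * p = 0 := by
  have hp := h.isIdempotentElem
  calc p * D.leibnizDefect a b * p
      = D.leibnizDefect (p * a * (p + q)) (b * p) := by
        rw [h.add_eq_one, mul_one, D.leibnizDefect_mul_left hDp, D.leibnizDefect_mul_right hDp,
          mul_assoc]
    _ = D.leibnizDefect (p * a * p * p) (b * p) + D.leibnizDefect (p * a * q) (b * p) := by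
        rw [mul_add, hp.mul_mul_self, leibnizDefect_add_left]
    _ = 0 := by
        rw [D.leibnizDefect_mul_mid hDp, D.leibnizDefect_mul_mid hDq, ← mul_assoc p b p,
          D.leibnizDefect_corner_eq_zero h hDp hDq,
          D.leibnizDefect_mul_mul_eq_zero hp h.mul_eq_zero hDp hDq, add_zero]

theorem leibnizDefect_eq_zero {u v : A} (h : IsMatrixUnits p q u v) (hDp : D.CommutesWithMul p)
    (a b : A) : D.leibnizDefect a b = 0 := by
  have hDq := hDp.of_add_eq_one h.add_eq_one
  have hpq : ∀ c, p * (q * c) = 0 := fun c => by rw [← mul_assoc, h.mul_eq_zero, zero_mul]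
  have hqp : ∀ c, q * (p * c) = 0 := fun c => by rw [← mul_assoc, h.symm.mul_eq_zero, zero_mul]
  calc D.leibnizDefect a b
      = p * D.leibnizDefect a b * p + p * D.leibnizDefect a b * q
        + (q * D.leibnizDefect a b * p + q * D.leibnizDefect a b * q) := by
        rw [← mul_add, ← mul_add, ← add_mul, ← add_mul, h.add_eq_one, one_mul, mul_one]
    _ = 0 := by
        rw [D.mul_leibnizDefect_mul_eq_zero h hDp hDq,
          D.mul_leibnizDefect_mul_eq_zero h.symm hDq hDp,
          ← D.leibnizDefect_mul_left hDp, ← D.leibnizDefect_mul_right hDq,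
          ← D.leibnizDefect_mul_left hDq, ← D.leibnizDefect_mul_right hDp,
          D.leibnizDefect_mul_right_eq_zero hDq (hqp a),
          D.leibnizDefect_mul_right_eq_zero hDp (hpq a)]
        simp

theorem leibniz_of_isMatrixUnits {u v : A} (h : IsMatrixUnits p q u v)
    (htwo : ∀ x : A, x + x = 0 → x = 0) (hcp : IsCommutatorCorner p)
    (hcq : IsCommutatorCorner q) (a b : A) : D (a * b) = D a * b + a * D b := by
  -- Adding an inner derivation does not change the Leibniz defect, and this one makes `D p`
  -- commute with `p` because `(ad p)³ = ad p`.
  set D' := D + inner R A A ⁅D p, p⁆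
  have hD'p : ⁅p, D' p⁆ = 0 := by
    rw [add_apply, inner_apply_apply, lie_add, ← lie_skew (D p), lie_neg, lie_neg,
      h.isIdempotentElem.lie_lie_lie, add_neg_cancel]
  have h0 := D'.leibnizDefect_eq_zero h
    (D'.commutesWithMul_of_lie_apply_eq_zero h.isIdempotentElem h.add_eq_one htwo hD'p hcp hcq)
    a b
  rwa [leibnizDefect_add_inner, leibnizDefect, sub_sub, sub_eq_zero] at h0

end LieDerivation

namespace Module.End

theorem exists_eq_lie_of_leibniz {R W : Type*} [CommRing R] [AddCommGroup W] [Module R W]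
    (D : Module.End R W →ₗ[R] Module.End R W) (hD : ∀ a b, D (a * b) = D a * b + a * D b)
    {w₀ : W} {φ : Module.Dual R W} (hφ : φ w₀ = 1) :
    ∃ y : Module.End R W, ∀ a, D a = ⁅y, a⁆ := by
  -- Apply the Leibniz rule to `a ∘ (φ(·) v) = φ(·) (a v)` and evaluate at `w₀`.
  refine ⟨LinearMap.applyₗ w₀ ∘ₗ D ∘ₗ LinearMap.smulRightₗ φ, fun a => LinearMap.ext fun v => ?_⟩
  have hrank : a * φ.smulRight v = φ.smulRight (a v) := by ext; simp
  have h := LinearMap.congr_fun (hD a (φ.smulRight v)) w₀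
  simp only [hrank, LinearMap.add_apply, Module.End.mul_apply, LinearMap.smulRight_apply, hφ,
    one_smul] at h
  simp [Ring.lie_def, h]

theorem exists_eq_lie_finsupp_nat {R M : Type*} [Semiring R] [AddCommGroup M] [Module R M]
    (a : Module.End R (ℕ →₀ M)) : ∃ b c : Module.End R (ℕ →₀ M), a = ⁅b, c⁆ := by
  classical
  -- `c = S` is the shift `eₙ ↦ eₙ₊₁`, and `b eₙ₊₁ = a eₙ + S (b eₙ)` forces `b S - S b = a`.
  let S : Module.End R (ℕ →₀ M) := Finsupp.lmapDomain M R Nat.succ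
  let B : ℕ → M →ₗ[R] ℕ →₀ M := fun n =>
    Nat.rec 0 (fun k Bk => a ∘ₗ Finsupp.lsingle k + S ∘ₗ Bk) n
  refine ⟨Finsupp.lsum ℕ B, S, Finsupp.lhom_ext fun n m => ?_⟩
  have hB : B (n + 1) m = a (Finsupp.single n m) + S (B n m) := rfl
  simp [Ring.lie_def, S, Finsupp.lmapDomain_apply, Finsupp.mapDomain_single, hB]

end Module.End

section Decomposition

variable {R X W : Type*} [Semiring R] [AddCommGroup X] [Module R X] [AddCommGroup W]
  [Module R W]

theorem isCommutatorCorner_comp {i : X →ₗ[R] W} {r : W →ₗ[R] X} (hri : ∀ x, r (i x) = x)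
    (hX : ∀ a : Module.End R X, ∃ b c : Module.End R X, a = ⁅b, c⁆) :
    IsCommutatorCorner (i ∘ₗ r : Module.End R W) := by
  intro a
  obtain ⟨b, c, hbc⟩ := hX (r ∘ₗ a ∘ₗ i)
  refine ⟨i ∘ₗ b ∘ₗ r, i ∘ₗ c ∘ₗ r, LinearMap.ext fun w => ?_⟩
  have h := LinearMap.congr_fun hbc (r w)
  simp only [LinearMap.comp_apply, Ring.lie_def, LinearMap.sub_apply, Module.End.mul_apply]
    at h ⊢
  simp [hri, h]

theorem isMatrixUnits_comp {i₁ i₂ : X →ₗ[R] W} {r₁ r₂ : W →ₗ[R] X} (h₁ : ∀ x, r₁ (i₁ x) = x)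
    (h₂ : ∀ x, r₂ (i₂ x) = x) (hsum : ∀ w, i₁ (r₁ w) + i₂ (r₂ w) = w) :
    IsMatrixUnits (i₁ ∘ₗ r₁ : Module.End R W) (i₂ ∘ₗ r₂) (i₁ ∘ₗ r₂) (i₂ ∘ₗ r₁) :=
  ⟨LinearMap.ext hsum, LinearMap.ext fun w => by simp [h₂], LinearMap.ext fun w => by simp [h₁],
    LinearMap.ext fun w => by simp [h₂], LinearMap.ext fun w => by simp [h₁]⟩

theorem exists_isMatrixUnits_of_linearEquiv_prod (e : W ≃ₗ[R] X × X)
    (hX : ∀ a : Module.End R X, ∃ b c : Module.End R X, a = ⁅b, c⁆) :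
    ∃ p q u v : Module.End R W,
      IsMatrixUnits p q u v ∧ IsCommutatorCorner p ∧ IsCommutatorCorner q := by
  let i₁ := e.symm.toLinearMap ∘ₗ LinearMap.inl R X X
  let i₂ := e.symm.toLinearMap ∘ₗ LinearMap.inr R X X
  let r₁ := LinearMap.fst R X X ∘ₗ e.toLinearMap
  let r₂ := LinearMap.snd R X X ∘ₗ e.toLinearMap
  have h₁ : ∀ x, r₁ (i₁ x) = x := by simp [i₁, r₁]
  have h₂ : ∀ x, r₂ (i₂ x) = x := by simp [i₂, r₂]
  have hsum : ∀ w, i₁ (r₁ w) + i₂ (r₂ w) = w := fun w => by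
    simp [i₁, i₂, r₁, r₂, ← map_add]
  exact ⟨_, _, _, _, isMatrixUnits_comp h₁ h₂ hsum, isCommutatorCorner_comp h₁ hX,
    isCommutatorCorner_comp h₂ hX⟩

end Decomposition

theorem nonempty_linearEquiv_finsupp_nat_prod {F V : Type*} [Field F] [AddCommGroup V]
    [Module F V] (hV : Cardinal.aleph0 ≤ Module.rank F V) :
    Nonempty (V ≃ₗ[F] (ℕ →₀ V) × (ℕ →₀ V)) := by
  refine nonempty_linearEquiv_of_rank_eq ?_
  rw [rank_prod', rank_finsupp, Cardinal.mk_nat, Cardinal.lift_aleph0, Cardinal.lift_uzero,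
    Cardinal.aleph0_mul_eq hV, Cardinal.add_eq_self hV]

/-- For `char F ≠ 2` and an infinite-dimensional vector space `V` over
`F`, every derivation of the Lie algebra `End_F(V)⁽⁻⁾` (with `⁅f,g⁆ = f∘g - g∘f`) is
inner: it equals `ad(y)` for some `y ∈ End_F(V)`. -/
theorem stmt_11 (F V : Type*) [Field F] [AddCommGroup V] [Module F V]
    (hchar : ringChar F ≠ 2) (hV : ¬ Module.Finite F V)
    (d : LieDerivation F (Module.End F V) (Module.End F V)) :
    ∃ y : Module.End F V, ∀ a : Module.End F V, d a = ⁅y, a⁆ := by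
  have hrank : Cardinal.aleph0 ≤ Module.rank F V :=
    not_lt.mp (mt Module.rank_lt_aleph0_iff.mp hV)
  obtain ⟨e⟩ := nonempty_linearEquiv_finsupp_nat_prod hrank
  obtain ⟨p, q, u, v, h, hcp, hcq⟩ :=
    exists_isMatrixUnits_of_linearEquiv_prod e Module.End.exists_eq_lie_finsupp_nat
  have htwo : ∀ x : Module.End F V, x + x = 0 → x = 0 := fun x hx => by
    rw [← two_smul F x] at hx
    exact (smul_eq_zero.mp hx).resolve_left (Ring.two_ne_zero hchar)
  have : Nontrivial V := rank_pos_iff_nontrivial.mp (Cardinal.aleph0_pos.trans_le hrank)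
  obtain ⟨w₀, hw₀⟩ := exists_ne (0 : V)
  obtain ⟨φ, hφ⟩ := Module.Projective.exists_dual_eq_one F hw₀
  exact Module.End.exists_eq_lie_of_leibniz d (d.leibniz_of_isMatrixUnits h htwo hcp hcq) hφ
end

section
/- Let F be a field with char F ≠ 2 and let I be an infinite set. Then every derivation of the Lie algebra gl_rcf(I,F) is inner: for every Lie algebra derivation d there exists y ∈ M_rcf(I,F) such that d(a) = ya − ay for all a ∈ M_rcf(I,F). -/
open Classical in
/-- matrix unit -/
noncomputable def EE {F I : Type*} [Field F] (k l : I) : Matrix I I F :=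
  fun p q => if p = k ∧ q = l then 1 else 0

open Classical in
/-- identity matrix -/
noncomputable def IdM {F I : Type*} [Field F] : Matrix I I F :=
  fun p q => if p = q then 1 else 0

namespace Stmt12Aux

variable {F I : Type*} [Field F]

lemma matMul_apply (a b : Matrix I I F) (i j : I) :
    matMul a b i j = ∑ᶠ k, a i k * b k j := rfl

lemma exists_of_matMul_ne (a b : Matrix I I F) {i j : I} (h : matMul a b i j ≠ 0) :
    ∃ k, a i k ≠ 0 ∧ b k j ≠ 0 := by
  by_contra hc
  push_neg at hc
  apply h
  apply finsum_eq_zero_of_forall_eq_zero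
  intro k
  rcases eq_or_ne (a i k) 0 with h1 | h1
  · simp [h1]
  · simp [hc k h1]

lemma rcf_zero : IsRcf (0 : Matrix I I F) := by
  constructor <;> intro i <;> simp

lemma rcf_add {a b : Matrix I I F} (ha : IsRcf a) (hb : IsRcf b) : IsRcf (a + b) := by
  constructor
  · intro i
    apply ((ha.1 i).union (hb.1 i)).subset
    intro j hj
    by_contra hc
    simp only [Set.mem_union, Set.mem_setOf_eq] at hc
    push_neg at hc
    simp only [Set.mem_setOf_eq, Matrix.add_apply, hc.1, hc.2, add_zero, ne_eq,
      not_true_eq_false] at hj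
  · intro j
    apply ((ha.2 j).union (hb.2 j)).subset
    intro i hi
    by_contra hc
    simp only [Set.mem_union, Set.mem_setOf_eq] at hc
    push_neg at hc
    simp only [Set.mem_setOf_eq, Matrix.add_apply, hc.1, hc.2, add_zero, ne_eq,
      not_true_eq_false] at hi

lemma rcf_smul (c : F) {a : Matrix I I F} (ha : IsRcf a) : IsRcf (c • a) := by
  constructor
  · intro i
    apply (ha.1 i).subset
    intro j hj
    simp only [Set.mem_setOf_eq, Matrix.smul_apply, smul_eq_mul, ne_eq] at hj ⊢
    intro h; exact hj (by rw [h, mul_zero])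
  · intro j
    apply (ha.2 j).subset
    intro i hi
    simp only [Set.mem_setOf_eq, Matrix.smul_apply, smul_eq_mul, ne_eq] at hi ⊢
    intro h; exact hi (by rw [h, mul_zero])

lemma rcf_neg {a : Matrix I I F} (ha : IsRcf a) : IsRcf (-a) := by
  have := rcf_smul (-1 : F) ha
  simpa using this

lemma rcf_sub {a b : Matrix I I F} (ha : IsRcf a) (hb : IsRcf b) : IsRcf (a - b) := by
  have := rcf_add ha (rcf_neg hb)
  simpa [sub_eq_add_neg] using this

lemma rcf_mul {a b : Matrix I I F} (ha : IsRcf a) (hb : IsRcf b) : IsRcf (matMul a b) := by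
  constructor
  · intro i
    apply Set.Finite.subset ((ha.1 i).biUnion (fun k _ => hb.1 k))
    intro j hj
    obtain ⟨k, h1, h2⟩ := exists_of_matMul_ne a b hj
    exact Set.mem_biUnion h1 h2
  · intro j
    apply Set.Finite.subset ((hb.2 j).biUnion (fun k _ => ha.2 k))
    intro i hi
    obtain ⟨k, h1, h2⟩ := exists_of_matMul_ne a b hi
    exact Set.mem_biUnion h2 h1

lemma rcf_EE (k l : I) : IsRcf (EE k l : Matrix I I F) := by
  constructor
  · intro i
    apply (Set.finite_singleton l).subset
    intro j hj
    simp only [Set.mem_setOf_eq, EE, ne_eq, ite_eq_right_iff, one_ne_zero] at hj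
    push_neg at hj
    simp [hj.1.2]
  · intro j
    apply (Set.finite_singleton k).subset
    intro i hi
    simp only [Set.mem_setOf_eq, EE, ne_eq, ite_eq_right_iff, one_ne_zero] at hi
    push_neg at hi
    simp [hi.1.1]

open Classical in
lemma mulEE (x : Matrix I I F) (k l p q : I) :
    matMul x (EE k l) p q = if q = l then x p k else 0 := by
  rw [matMul_apply]
  by_cases hq : q = l
  · rw [finsum_eq_single _ k]
    · simp [EE, hq]
    · intro m hm; simp [EE, hm]
  · rw [finsum_eq_zero_of_forall_eq_zero]
    · simp [hq]
    · intro m; simp [EE, hq]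

open Classical in
lemma EEmul (x : Matrix I I F) (k l p q : I) :
    matMul (EE k l) x p q = if p = k then x l q else 0 := by
  rw [matMul_apply]
  by_cases hp : p = k
  · rw [finsum_eq_single _ l]
    · simp [EE, hp]
    · intro m hm; simp [EE, hm]
  · rw [finsum_eq_zero_of_forall_eq_zero]
    · simp [hp]
    · intro m; simp [EE, hp]

open Classical in
lemma EE_mul_EE (i j k l : I) :
    matMul (EE i j) (EE k l) = if j = k then (EE i l : Matrix I I F) else 0 := by
  funext p q
  rw [mulEE]
  by_cases hj : j = k <;> simp [EE, hj] <;> aesop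

lemma supp_left (a b : Matrix I I F) (i j : I) :
    Function.support (fun k => a i k * b k j) ⊆ {k | a i k ≠ 0} := by
  intro k hk
  simp only [Function.mem_support] at hk
  simp only [Set.mem_setOf_eq]
  intro h; exact hk (by rw [h, zero_mul])

lemma supp_right (a b : Matrix I I F) (i j : I) :
    Function.support (fun k => a i k * b k j) ⊆ {k | b k j ≠ 0} := by
  intro k hk
  simp only [Function.mem_support] at hk
  simp only [Set.mem_setOf_eq]
  intro h; exact hk (by rw [h, mul_zero])

lemma matMul_add_right {a : Matrix I I F} (ha : IsRcf a) (x y : Matrix I I F) :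
    matMul a (x + y) = matMul a x + matMul a y := by
  funext i j
  simp only [Matrix.add_apply, matMul_apply]
  rw [← finsum_add_distrib ((ha.1 i).subset (supp_left a x i j))
      ((ha.1 i).subset (supp_left a y i j))]
  congr 1; funext k; simp [Matrix.add_apply, mul_add]

lemma matMul_sub_right {a : Matrix I I F} (ha : IsRcf a) (x y : Matrix I I F) :
    matMul a (x - y) = matMul a x - matMul a y := by
  funext i j
  simp only [Matrix.sub_apply, matMul_apply]
  rw [← finsum_sub_distrib ((ha.1 i).subset (supp_left a x i j))
      ((ha.1 i).subset (supp_left a y i j))]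
  congr 1; funext k; simp [Matrix.sub_apply, mul_sub]

lemma matMul_add_left (x y : Matrix I I F) {b : Matrix I I F} (hb : IsRcf b) :
    matMul (x + y) b = matMul x b + matMul y b := by
  funext i j
  simp only [Matrix.add_apply, matMul_apply]
  rw [← finsum_add_distrib ((hb.2 j).subset (supp_right x b i j))
      ((hb.2 j).subset (supp_right y b i j))]
  congr 1; funext k; simp [Matrix.add_apply, add_mul]

lemma matMul_sub_left (x y : Matrix I I F) {b : Matrix I I F} (hb : IsRcf b) :
    matMul (x - y) b = matMul x b - matMul y b := by
  funext i j
  simp only [Matrix.sub_apply, matMul_apply]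
  rw [← finsum_sub_distrib ((hb.2 j).subset (supp_right x b i j))
      ((hb.2 j).subset (supp_right y b i j))]
  congr 1; funext k; simp [Matrix.sub_apply, sub_mul]

lemma matMul_smul_left (c : F) (a b : Matrix I I F) :
    matMul (c • a) b = c • matMul a b := by
  funext i j
  simp only [Matrix.smul_apply, matMul_apply, smul_eq_mul]
  have h := smul_finsum c (fun k => a i k * b k j)
  simp only [smul_eq_mul] at h
  rw [h]
  congr 1; funext k; rw [mul_assoc]

lemma matMul_smul_right (c : F) (a b : Matrix I I F) :
    matMul a (c • b) = c • matMul a b := by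
  funext i j
  simp only [Matrix.smul_apply, matMul_apply, smul_eq_mul]
  have h := smul_finsum c (fun k => a i k * b k j)
  simp only [smul_eq_mul] at h
  rw [h]
  congr 1; funext k; ring

lemma matMul_zero_left (b : Matrix I I F) : matMul 0 b = 0 := by
  funext i j
  rw [matMul_apply]
  apply finsum_eq_zero_of_forall_eq_zero
  intro k; simp

lemma matMul_zero_right (a : Matrix I I F) : matMul a 0 = 0 := by
  funext i j
  rw [matMul_apply]
  apply finsum_eq_zero_of_forall_eq_zero
  intro k; simp

open Classical in
lemma matMul_assoc {a : Matrix I I F} (b : Matrix I I F) {c : Matrix I I F}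
    (ha : IsRcf a) (hc : IsRcf c) :
    matMul (matMul a b) c = matMul a (matMul b c) := by
  funext i j
  classical
  obtain ⟨A, hA⟩ := (ha.1 i).exists_finset_coe
  obtain ⟨C, hC⟩ := (hc.2 j).exists_finset_coe
  rw [matMul_apply, matMul_apply]
  rw [finsum_eq_finset_sum_of_support_subset _ (s := C)
    (by rw [hC]; exact supp_right (matMul a b) c i j)]
  rw [finsum_eq_finset_sum_of_support_subset _ (s := A)
    (by rw [hA]; exact supp_left a (matMul b c) i j)]
  have h1 : ∀ l, matMul a b i l * c l j = ∑ k ∈ A, a i k * b k l * c l j := by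
    intro l
    rw [matMul_apply, finsum_eq_finset_sum_of_support_subset _ (s := A)
      (by rw [hA]; exact supp_left a b i l), Finset.sum_mul]
  have h2 : ∀ k, a i k * matMul b c k j = ∑ l ∈ C, a i k * (b k l * c l j) := by
    intro k
    rw [matMul_apply, finsum_eq_finset_sum_of_support_subset _ (s := C)
      (by rw [hC]; exact supp_right b c k j), Finset.mul_sum]
  simp_rw [h1, h2]
  rw [Finset.sum_comm]
  congr 1; funext l; congr 1; funext k; ring

lemma matMul_diag_left {z : Matrix I I F} (hz : ∀ p q, p ≠ q → z p q = 0)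
    (x : Matrix I I F) (i j : I) : matMul z x i j = z i i * x i j := by
  rw [matMul_apply, finsum_eq_single _ i]
  intro m hm
  rw [hz i m (fun h => hm (h.symm ▸ rfl))]
  · exact zero_mul _

lemma matMul_diag_right {z : Matrix I I F} (hz : ∀ p q, p ≠ q → z p q = 0)
    (x : Matrix I I F) (i j : I) : matMul x z i j = x i j * z j j := by
  rw [matMul_apply, finsum_eq_single _ j]
  intro m hm
  rw [hz m j hm]
  · exact mul_zero _

open Classical in
lemma matMul_smulIdM_left (c : F) (x : Matrix I I F) : matMul (c • IdM) x = c • x := by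
  funext i j
  rw [matMul_apply, finsum_eq_single _ i]
  · simp [IdM]
  · intro m hm
    simp [IdM, Ne.symm hm]

open Classical in
lemma matMul_smulIdM_right (c : F) (x : Matrix I I F) : matMul x (c • IdM) = c • x := by
  funext i j
  rw [matMul_apply, finsum_eq_single _ j]
  · simp [IdM, mul_comm]
  · intro m hm
    simp [IdM, hm]

lemma key_sum (A : ℕ → ℕ → F) (m n : ℕ) :
    (if m = 0 then (0:F) else
      -(∑ k ∈ Finset.range (min (m - 1 + 1) n), A (m-1-k) (n-1-k)))
    - (-(∑ k ∈ Finset.range (min (m+1) (n+1)), A (m-k) (n+1-1-k))) = A m n := by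
  have h1 : min (m+1) (n+1) = min m n + 1 := by omega
  have hsplit : ∑ k ∈ Finset.range (min (m+1) (n+1)), A (m-k) (n+1-1-k)
      = A m n + ∑ k ∈ Finset.range (min m n), A (m-1-k) (n-1-k) := by
    rw [h1, Finset.sum_range_succ', add_comm]
    simp only [Nat.sub_zero, Nat.add_sub_cancel]
    congr 1
    apply Finset.sum_congr rfl
    intro k _
    rw [show m - (k+1) = m - 1 - k from by omega,
      show n - (k+1) = n-1-k from by omega]
  rcases Nat.eq_zero_or_pos m with hm | hm
  · subst hm
    rw [if_pos rfl, hsplit]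
    simp
  · rw [if_neg (by omega), hsplit, show min (m-1+1) n = min m n from by omega]
    ring

open Classical in
lemma exists_commutator [Infinite I] (a : Matrix I I F) (ha : IsRcf a) :
    ∃ u v : Matrix I I F, IsRcf u ∧ IsRcf v ∧ matMul u v - matMul v u = a := by
  obtain ⟨e⟩ : Nonempty (I ≃ I × ℕ) := by
    apply Cardinal.eq.mp
    have h1 : Cardinal.mk (I × ℕ) = Cardinal.mk I * Cardinal.aleph0 := by
      simp [Cardinal.mk_prod]
    rw [h1, Cardinal.mul_eq_left (Cardinal.aleph0_le_mk I) (Cardinal.aleph0_le_mk I)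
      Cardinal.aleph0_ne_zero]
  set S : Matrix I I F :=
    fun x z => if (e x).1 = (e z).1 ∧ (e x).2 = (e z).2 + 1 then 1 else 0 with hS
  set b : Matrix I I F :=
    fun x z => -(∑ k ∈ Finset.range (min ((e x).2 + 1) ((e z).2)),
      a (e.symm ((e x).1, (e x).2 - k)) (e.symm ((e z).1, (e z).2 - 1 - k))) with hb
  have hSne : ∀ x z, S x z ≠ 0 → (e z).1 = (e x).1 ∧ (e x).2 = (e z).2 + 1 := by
    intro x z h
    rw [hS] at h
    by_cases hc : (e x).1 = (e z).1 ∧ (e x).2 = (e z).2 + 1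
    · exact ⟨hc.1.symm, hc.2⟩
    · simp [hc] at h
  have hSrcf : IsRcf S := by
    constructor
    · intro x
      apply (Set.finite_singleton (e.symm ((e x).1, (e x).2 - 1))).subset
      intro z hz
      obtain ⟨h1, h2⟩ := hSne x z hz
      have h3 : e z = ((e x).1, (e x).2 - 1) := by
        rw [Prod.ext_iff]
        exact ⟨h1, by omega⟩
      simp [← h3]
    · intro z
      apply (Set.finite_singleton (e.symm ((e z).1, (e z).2 + 1))).subset
      intro x hx
      obtain ⟨h1, h2⟩ := hSne x z hx
      have h3 : e x = ((e z).1, (e z).2 + 1) := by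
        rw [Prod.ext_iff]
        exact ⟨h1.symm, h2⟩
      simp [← h3]
  have hbrcf : IsRcf b := by
    constructor
    · intro x
      apply Set.Finite.subset (Set.Finite.biUnion (Set.finite_Iic ((e x).2))
        (fun k _ => ((ha.1 (e.symm ((e x).1, (e x).2 - k))).image
          (fun w => e.symm ((e w).1, (e w).2 + 1 + k)))))
      intro z hz
      simp only [Set.mem_setOf_eq, hb, ne_eq, neg_eq_zero] at hz
      obtain ⟨k, hk, hak⟩ := Finset.exists_ne_zero_of_sum_ne_zero hz
      rw [Finset.mem_range, lt_min_iff] at hk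
      have hz2 : z ∈ (fun w => e.symm ((e w).1, (e w).2 + 1 + k)) ''
          {w | a (e.symm ((e x).1, (e x).2 - k)) w ≠ 0} := by
        refine ⟨e.symm ((e z).1, (e z).2 - 1 - k), hak, ?_⟩
        simp only [Equiv.apply_symm_apply]
        rw [show (e z).2 - 1 - k + 1 + k = (e z).2 from by omega, Prod.mk.eta,
          Equiv.symm_apply_apply]
      exact Set.mem_biUnion (Set.mem_Iic.mpr (by omega : k ≤ (e x).2)) hz2
    · intro z
      apply Set.Finite.subset (Set.Finite.biUnion (Set.finite_Iio ((e z).2))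
        (fun k _ => ((ha.2 (e.symm ((e z).1, (e z).2 - 1 - k))).image
          (fun w => e.symm ((e w).1, (e w).2 + k)))))
      intro x hx
      simp only [Set.mem_setOf_eq, hb, ne_eq, neg_eq_zero] at hx
      obtain ⟨k, hk, hak⟩ := Finset.exists_ne_zero_of_sum_ne_zero hx
      rw [Finset.mem_range, lt_min_iff] at hk
      have hx2 : x ∈ (fun w => e.symm ((e w).1, (e w).2 + k)) ''
          {w | a w (e.symm ((e z).1, (e z).2 - 1 - k)) ≠ 0} := by
        refine ⟨e.symm ((e x).1, (e x).2 - k), hak, ?_⟩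
        simp only [Equiv.apply_symm_apply]
        rw [show (e x).2 - k + k = (e x).2 from by omega, Prod.mk.eta,
          Equiv.symm_apply_apply]
      exact Set.mem_biUnion (Set.mem_Iio.mpr hk.2) hx2
  refine ⟨S, b, hSrcf, hbrcf, ?_⟩
  funext x z
  have hSb : matMul S b x z =
      if (e x).2 = 0 then 0 else b (e.symm ((e x).1, (e x).2 - 1)) z := by
    rw [matMul_apply]
    by_cases hm : (e x).2 = 0
    · rw [if_pos hm]
      apply finsum_eq_zero_of_forall_eq_zero
      intro w
      have h0 : S x w = 0 := by
        by_contra hc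
        obtain ⟨_, h2⟩ := hSne x w hc
        omega
      rw [h0, zero_mul]
    · rw [if_neg hm]
      rw [finsum_eq_single _ (e.symm ((e x).1, (e x).2 - 1))]
      · have hcond : S x (e.symm ((e x).1, (e x).2 - 1)) = 1 := by
          rw [hS]
          have h4 : (e x).2 = (e x).2 - 1 + 1 := by omega
          simp [← h4]
        rw [hcond, one_mul]
      · intro w hw
        have h0 : S x w = 0 := by
          by_contra hc
          obtain ⟨h1, h2⟩ := hSne x w hc
          apply hw
          have h3 : e w = ((e x).1, (e x).2 - 1) := by
            rw [Prod.ext_iff]; exact ⟨h1, by omega⟩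
          rw [← h3]; simp
        rw [h0, zero_mul]
  have hbS : matMul b S x z = b x (e.symm ((e z).1, (e z).2 + 1)) := by
    rw [matMul_apply]
    rw [finsum_eq_single _ (e.symm ((e z).1, (e z).2 + 1))]
    · have hcond : S (e.symm ((e z).1, (e z).2 + 1)) z = 1 := by
        simp [hS]
      rw [hcond, mul_one]
    · intro w hw
      have h0 : S w z = 0 := by
        by_contra hc
        obtain ⟨h1, h2⟩ := hSne w z hc
        apply hw
        have h3 : e w = ((e z).1, (e z).2 + 1) := by
          rw [Prod.ext_iff]; exact ⟨h1.symm, h2⟩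
        rw [← h3]; simp
      rw [h0, mul_zero]
  rw [Matrix.sub_apply, hSb, hbS]
  have hgoal := key_sum (fun u v => a (e.symm ((e x).1, u)) (e.symm ((e z).1, v)))
    (e x).2 (e z).2
  simp only [hb, Equiv.apply_symm_apply]
  conv_rhs => rw [← Equiv.symm_apply_apply e x, ← Equiv.symm_apply_apply e z,
    ← Prod.mk.eta (p := e x), ← Prod.mk.eta (p := e z)]
  convert hgoal using 2

end Stmt12Aux

open Stmt12Aux in
/-- For `char F ≠ 2` and `I` infinite, every derivation of the Lie
algebra `gl_rcf(I,F)` is inner: there is `y ∈ M_rcf(I,F)` with `d(a) = y*a - a*y`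
for all `a ∈ M_rcf(I,F)`. -/
theorem stmt_12 (F I : Type*) [Field F] [Infinite I] (hchar : ringChar F ≠ 2)
    (d : Matrix I I F → Matrix I I F)
    (hmap : ∀ a, IsRcf a → IsRcf (d a))
    (hadd : ∀ a b, IsRcf a → IsRcf b → d (a + b) = d a + d b)
    (hsmul : ∀ (c : F) (a), IsRcf a → d (c • a) = c • d a)
    (hbracket : ∀ a b, IsRcf a → IsRcf b →
      d (matMul a b - matMul b a) =
        (matMul (d a) b - matMul b (d a)) + (matMul a (d b) - matMul (d b) a)) :
    ∃ y : Matrix I I F, IsRcf y ∧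
      ∀ a, IsRcf a → d a = matMul y a - matMul a y := by
  classical
  have two_ne : (2:F) ≠ 0 := Ring.two_ne_zero hchar
  obtain ⟨o⟩ : Nonempty I := inferInstance
  have dzero : d 0 = 0 := by
    have h := hsmul 0 0 rcf_zero
    simpa using h
  have dsub : ∀ u v, IsRcf u → IsRcf v → d (u - v) = d u - d v := by
    intro u v hu hv
    have h1 : u - v = u + (-1 : F) • v := by
      funext p q
      simp [sub_eq_add_neg]
    rw [h1, hadd u _ hu (rcf_smul _ hv), hsmul _ _ hv]
    funext p q
    simp [sub_eq_add_neg]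
  have entry : ∀ {x z : Matrix I I F}, x = z → ∀ p q : I, x p q = z p q := by
    intro x z h p q
    rw [h]
  -- ### identities for d on matrix units ###
  have hIDA : ∀ p k : I, p ≠ k → d (EE p p) p k + d (EE k k) p k = 0 := by
    intro p k hpk
    have h := hbracket (EE p p) (EE k k) (rcf_EE p p) (rcf_EE k k)
    rw [show matMul (EE p p) (EE k k) - matMul (EE k k) (EE p p) = (0 : Matrix I I F) from by
      rw [EE_mul_EE, EE_mul_EE, if_neg hpk, if_neg (Ne.symm hpk), sub_zero], dzero] at h
    have h2 := entry h p k
    simp [mulEE, EEmul, Matrix.add_apply, Matrix.sub_apply, Matrix.zero_apply,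
      hpk, Ne.symm hpk] at h2
    first
    | linear_combination -h2
    | linear_combination h2
  have hA1 : ∀ k l p q : I, p ≠ k → p ≠ l → q ≠ l → p ≠ q → d (EE k l) p q = 0 := by
    intro k l p q hpk hpl hql hpq
    have h := hbracket (EE p p) (EE k l) (rcf_EE p p) (rcf_EE k l)
    rw [show matMul (EE p p) (EE k l) - matMul (EE k l) (EE p p) = (0 : Matrix I I F) from by
      rw [EE_mul_EE, EE_mul_EE, if_neg hpk, if_neg (Ne.symm hpl), sub_zero], dzero] at h
    have h2 := entry h p q
    simp [mulEE, EEmul, Matrix.add_apply, Matrix.sub_apply, Matrix.zero_apply,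
      hpk, hql, Ne.symm hpq] at h2
    first
    | linear_combination -h2
    | linear_combination h2
  have hA2 : ∀ k l p q : I, q ≠ k → q ≠ l → p ≠ k → p ≠ q → d (EE k l) p q = 0 := by
    intro k l p q hqk hql hpk hpq
    have h := hbracket (EE k l) (EE q q) (rcf_EE k l) (rcf_EE q q)
    rw [show matMul (EE k l) (EE q q) - matMul (EE q q) (EE k l) = (0 : Matrix I I F) from by
      rw [EE_mul_EE, EE_mul_EE, if_neg (Ne.symm hql), if_neg hqk, sub_zero], dzero] at h
    have h2 := entry h p q
    simp [mulEE, EEmul, Matrix.add_apply, Matrix.sub_apply, Matrix.zero_apply,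
      hpq, hpk, hql] at h2
    first
    | linear_combination -h2
    | linear_combination h2
  have hID8 : ∀ k l : I, k ≠ l → d (EE k l) l k = 0 := by
    intro k l hkl
    have h := hbracket (EE k k) (EE k l) (rcf_EE k k) (rcf_EE k l)
    rw [show matMul (EE k k) (EE k l) - matMul (EE k l) (EE k k) = (EE k l : Matrix I I F) from by
      rw [EE_mul_EE, EE_mul_EE, if_pos rfl, if_neg (Ne.symm hkl), sub_zero]] at h
    have h2 := entry h l k
    simp [mulEE, EEmul, Matrix.add_apply, Matrix.sub_apply, hkl, Ne.symm hkl] at h2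
    have h3 : (2:F) * d (EE k l) l k = 0 := by
      first
      | linear_combination h2
      | linear_combination -h2
      | linear_combination 2*h2
      | linear_combination -2*h2
    rcases mul_eq_zero.mp h3 with h4 | h4
    · exact absurd h4 two_ne
    · exact h4
  have hBf : ∀ k l p : I, k ≠ l → p ≠ k → d (EE k l) p l = d (EE k k) p k := by
    intro k l p hkl hpk
    have h := hbracket (EE k k) (EE k l) (rcf_EE k k) (rcf_EE k l)
    rw [show matMul (EE k k) (EE k l) - matMul (EE k l) (EE k k) = (EE k l : Matrix I I F) from by
      rw [EE_mul_EE, EE_mul_EE, if_pos rfl, if_neg (Ne.symm hkl), sub_zero]] at h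
    have h2 := entry h p l
    simp [mulEE, EEmul, Matrix.add_apply, Matrix.sub_apply, hpk, hkl, Ne.symm hkl] at h2
    first
    | linear_combination h2
    | linear_combination -h2
  have hCf : ∀ k l q : I, k ≠ l → q ≠ l → d (EE k l) k q = d (EE l l) l q := by
    intro k l q hkl hql
    have h := hbracket (EE k l) (EE l l) (rcf_EE k l) (rcf_EE l l)
    rw [show matMul (EE k l) (EE l l) - matMul (EE l l) (EE k l) = (EE k l : Matrix I I F) from by
      rw [EE_mul_EE, EE_mul_EE, if_pos rfl, if_neg (Ne.symm hkl), sub_zero]] at h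
    have h2 := entry h k q
    simp [mulEE, EEmul, Matrix.add_apply, Matrix.sub_apply, hkl, hql] at h2
    first
    | linear_combination h2
    | linear_combination -h2
  have hID7 : ∀ k l p : I, k ≠ l → p ≠ k → p ≠ l → d (EE k l) p p = 0 := by
    intro k l p hkl hpk hpl
    have h := hbracket (EE k p) (EE p l) (rcf_EE k p) (rcf_EE p l)
    rw [show matMul (EE k p) (EE p l) - matMul (EE p l) (EE k p) = (EE k l : Matrix I I F) from by
      rw [EE_mul_EE, EE_mul_EE, if_pos rfl, if_neg (Ne.symm hkl), sub_zero]] at h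
    have h2 := entry h p p
    simp [mulEE, EEmul, Matrix.add_apply, Matrix.sub_apply, hpk, hpl, Ne.symm hpk,
      Ne.symm hpl] at h2
    have h3 := hBf k p l (Ne.symm hpk) (fun hh => hkl hh.symm)
    have h4 := hCf p l k hpl hkl
    have h5 := hIDA l k (fun hh => hkl hh.symm)
    first
    | linear_combination h2 - h3 - h4 - h5
    | linear_combination h2 - h3 - h4 + h5
    | linear_combination -h2 - h3 - h4 - h5
    | linear_combination h2 + h3 + h4 + h5
    | linear_combination h2 + h3 + h4 - h5
  have hID1 : ∀ k l m : I, k ≠ l → k ≠ m → m ≠ l →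
      d (EE k l) k l = d (EE k m) k m + d (EE m l) m l := by
    intro k l m hkl hkm hml
    have h := hbracket (EE k m) (EE m l) (rcf_EE k m) (rcf_EE m l)
    rw [show matMul (EE k m) (EE m l) - matMul (EE m l) (EE k m) = (EE k l : Matrix I I F) from by
      rw [EE_mul_EE, EE_mul_EE, if_pos rfl, if_neg (Ne.symm hkl), sub_zero]] at h
    have h2 := entry h k l
    simp [mulEE, EEmul, Matrix.add_apply, Matrix.sub_apply, hkm, Ne.symm hml] at h2
    first
    | linear_combination h2
    | linear_combination -h2
  have hID2 : ∀ k l : I, k ≠ l → d (EE k l) k l + d (EE l k) l k = 0 := by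
    intro k l hkl
    obtain ⟨m, hm⟩ := Infinite.exists_notMem_finset ({k, l} : Finset I)
    simp only [Finset.mem_insert, Finset.mem_singleton] at hm
    push_neg at hm
    obtain ⟨hmk, hml⟩ := hm
    have h1 := hID1 m k l hmk hml (Ne.symm hkl)
    have h2 := hID1 m l k hml hmk hkl
    first
    | linear_combination -h1 - h2
    | linear_combination h1 + h2
    | linear_combination h1 - h2
    | linear_combination -h1 + h2
  -- ### the candidate matrix y ###
  set y : Matrix I I F := (fun p q => if p = q then (if p = o then 0 else d (EE p o) p o)
    else d (EE q q) p q) with hy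
  have hyoff : ∀ p q : I, p ≠ q → y p q = d (EE q q) p q := by
    intro p q h
    simp only [hy]
    rw [if_neg h]
  have hydiag : ∀ k : I, y k k = if k = o then 0 else d (EE k o) k o := by
    intro k
    simp [hy]
  have hyrcf : IsRcf y := by
    constructor
    · intro p
      apply (((hmap _ (rcf_EE p p)).1 p).union (Set.finite_singleton p)).subset
      intro q hq
      simp only [Set.mem_setOf_eq] at hq
      rw [Set.mem_union, Set.mem_singleton_iff]
      by_cases hpq : q = p
      · exact Or.inr hpq
      · refine Or.inl ?_
        have h := hIDA p q (Ne.symm hpq)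
        simp only [Set.mem_setOf_eq]
        intro hz
        exact hq (by rw [hyoff p q (Ne.symm hpq)]; linear_combination h - hz)
    · intro q
      apply (((hmap _ (rcf_EE q q)).2 q).union (Set.finite_singleton q)).subset
      intro p hp
      simp only [Set.mem_setOf_eq] at hp
      rw [Set.mem_union, Set.mem_singleton_iff]
      by_cases hpq : p = q
      · exact Or.inr hpq
      · refine Or.inl ?_
        simp only [Set.mem_setOf_eq]
        rw [hyoff p q hpq] at hp
        exact hp
  -- ### d agrees with ad y on off-diagonal matrix units ###
  have hG1 : ∀ k l : I, k ≠ l → d (EE k l) = matMul y (EE k l) - matMul (EE k l) y := by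
    intro k l hkl
    funext p q
    rw [Matrix.sub_apply, mulEE, EEmul]
    by_cases hq : q = l
    · rw [if_pos hq, hq]
      by_cases hp : p = k
      · rw [hp, if_pos rfl]
        by_cases hlo : l = o
        · rw [hlo, hydiag, hydiag, if_neg (fun hh => hkl (hh.trans hlo.symm)), if_pos rfl]
          ring
        · by_cases hko : k = o
          · rw [hko, hydiag, hydiag, if_pos rfl, if_neg hlo]
            have h2 := hID2 o l (fun hh => hlo hh.symm)
            linear_combination h2
          · rw [hydiag, hydiag, if_neg hko, if_neg hlo]
            have h1 := hID1 k l o hkl hko (fun hh => hlo hh.symm)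
            have h2 := hID2 l o hlo
            linear_combination h1 + h2
      · rw [if_neg hp, sub_zero, hyoff p k hp]
        exact hBf k l p hkl hp
    · rw [if_neg hq]
      by_cases hp : p = k
      · rw [if_pos hp, zero_sub, hp, hyoff l q (fun hh => hq hh.symm)]
        have h1 := hCf k l q hkl hq
        have h2 := hIDA l q (fun hh => hq hh.symm)
        linear_combination h1 + h2
      · rw [if_neg hp, sub_zero]
        by_cases hpq : p = q
        · rw [← hpq]
          exact hID7 k l p hkl hp (fun hh => hq (hpq.symm.trans hh))
        · by_cases hpl : p = l
          · by_cases hqk : q = k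
            · rw [hpl, hqk]
              exact hID8 k l hkl
            · exact hA2 k l p q hqk hq hp hpq
          · exact hA1 k l p q hp hpl hq hpq
  -- ### off-diagonal entries of delta(EE k k) vanish ###
  have hG2off : ∀ k p q : I, p ≠ q →
      (d (EE k k) - (matMul y (EE k k) - matMul (EE k k) y)) p q = 0 := by
    intro k p q hpq
    simp only [Matrix.sub_apply, mulEE, EEmul]
    by_cases hqk : q = k
    · subst hqk
      rw [if_pos rfl, if_neg hpq, hyoff p q hpq]
      ring
    · rw [if_neg hqk]
      by_cases hpk : p = k
      · subst hpk
        rw [if_pos rfl, hyoff p q (fun hh => hpq hh)]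
        have h := hIDA p q hpq
        first
        | linear_combination h
        | linear_combination -h
      · rw [if_neg hpk]
        have h := hA1 k k p q hpk hpk hqk hpq
        rw [h]
        ring
  -- ### Leibniz rule for ad y ###
  have hadL : ∀ u v : Matrix I I F, IsRcf u → IsRcf v →
      matMul y (matMul u v - matMul v u) - matMul (matMul u v - matMul v u) y =
      (matMul (matMul y u - matMul u y) v - matMul v (matMul y u - matMul u y)) +
      (matMul u (matMul y v - matMul v y) - matMul (matMul y v - matMul v y) u) := by
    intro u v hu hv
    rw [matMul_sub_right hyrcf (matMul u v) (matMul v u),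
      matMul_sub_left (matMul u v) (matMul v u) hyrcf,
      matMul_sub_left (matMul y u) (matMul u y) hv,
      matMul_sub_right hv (matMul y u) (matMul u y),
      matMul_sub_right hu (matMul y v) (matMul v y),
      matMul_sub_left (matMul y v) (matMul v y) hu,
      matMul_assoc v hu hyrcf, matMul_assoc u hv hyrcf,
      matMul_assoc u hyrcf hv, matMul_assoc y hu hv,
      matMul_assoc v hyrcf hu, matMul_assoc y hv hu]
    abel
  -- ### Leibniz rule for delta = d - ad y ###
  have hdL : ∀ u v : Matrix I I F, IsRcf u → IsRcf v →
      d (matMul u v - matMul v u)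
        - (matMul y (matMul u v - matMul v u) - matMul (matMul u v - matMul v u) y)
      = (matMul (d u - (matMul y u - matMul u y)) v
          - matMul v (d u - (matMul y u - matMul u y)))
        + (matMul u (d v - (matMul y v - matMul v y))
          - matMul (d v - (matMul y v - matMul v y)) u) := by
    intro u v hu hv
    rw [hbracket u v hu hv, hadL u v hu hv,
      matMul_sub_left (d u) (matMul y u - matMul u y) hv,
      matMul_sub_right hv (d u) (matMul y u - matMul u y),
      matMul_sub_right hu (d v) (matMul y v - matMul v y),
      matMul_sub_left (d v) (matMul y v - matMul v y) hu]
    abel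
  -- ### delta (EE k k) is independent of k ###
  have hLEE : ∀ k l : I, k ≠ l → matMul (EE k l) (EE l k) - matMul (EE l k) (EE k l)
      = (EE k k : Matrix I I F) - EE l l := by
    intro k l h
    rw [EE_mul_EE, EE_mul_EE, if_pos rfl, if_pos rfl]
  have hG2' : ∀ k : I, d (EE k k) - (matMul y (EE k k) - matMul (EE k k) y)
      = d (EE o o) - (matMul y (EE o o) - matMul (EE o o) y) := by
    intro k
    by_cases hko : k = o
    · rw [hko]
    · have h := hdL (EE k o) (EE o k) (rcf_EE k o) (rcf_EE o k)
      rw [hLEE k o hko, hG1 k o hko, hG1 o k (Ne.symm hko)] at h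
      simp only [sub_self, matMul_zero_left, matMul_zero_right, add_zero] at h
      rw [dsub _ _ (rcf_EE k k) (rcf_EE o o), matMul_sub_right hyrcf,
        matMul_sub_left _ _ hyrcf] at h
      rw [← sub_eq_zero, ← h]
      abel
  -- ### linear combinations of off-diagonal units are killed by delta ###
  have hdlin : ∀ (c c' : F) (u v : Matrix I I F), IsRcf u → IsRcf v →
      d (c • u + c' • v) = c • d u + c' • d v := by
    intro c c' u v hu hv
    rw [hadd _ _ (rcf_smul c hu) (rcf_smul c' hv), hsmul c u hu, hsmul c' v hv]
  have hcomb0 : ∀ (c c' : F) (i j i' j' : I), i ≠ j → i' ≠ j' →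
      d (c • EE i j + c' • EE i' j')
        - (matMul y (c • EE i j + c' • EE i' j')
           - matMul (c • EE i j + c' • EE i' j') y) = 0 := by
    intro c c' i j i' j' hij hij'
    rw [hdlin c c' _ _ (rcf_EE i j) (rcf_EE i' j'),
      matMul_add_right hyrcf, matMul_smul_right, matMul_smul_right,
      matMul_add_left _ _ hyrcf, matMul_smul_left, matMul_smul_left,
      hG1 i j hij, hG1 i' j' hij', smul_sub, smul_sub]
    abel
  -- ### the bracket [EE i i, [EE j j, a]] is a combination of units ###
  have hw_eq : ∀ (a : Matrix I I F) (i j : I), i ≠ j →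
      matMul (EE i i) (matMul (EE j j) a - matMul a (EE j j))
        - matMul (matMul (EE j j) a - matMul a (EE j j)) (EE i i)
      = (-(a i j)) • EE i j + (-(a j i)) • EE j i := by
    intro a i j hij
    funext p q
    simp only [Matrix.sub_apply, Matrix.add_apply, Matrix.smul_apply, smul_eq_mul,
      mulEE, EEmul, EE, if_neg hij]
    by_cases h1 : p = i <;> by_cases h2 : q = i <;> by_cases h3 : p = j <;>
      by_cases h4 : q = j <;>
      simp only [h1, h2, h3, h4, hij, Ne.symm hij, if_true, if_false, eq_self_iff_true,
        true_and, and_true, false_and, and_false, not_false_iff, ite_true, ite_false, sub_zero,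
        zero_sub, mul_one, mul_zero, add_zero, zero_add, neg_zero, neg_neg, ite_self] <;>
      first
      | ring
      | (exact absurd (h1.symm.trans h3) hij)
      | (exact absurd (h4.symm.trans h2) (Ne.symm hij))
      | simp_all
  -- ### off-diagonal entries of delta a vanish ###
  have hG3 : ∀ a, IsRcf a → ∀ i j : I, i ≠ j →
      (d a - (matMul y a - matMul a y)) i j = 0 := by
    intro a ha i j hij
    have hwrcf : IsRcf (matMul (EE j j) a - matMul a (EE j j)) :=
      rcf_sub (rcf_mul (rcf_EE j j) ha) (rcf_mul ha (rcf_EE j j))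
    have h := hdL (EE i i) (matMul (EE j j) a - matMul a (EE j j)) (rcf_EE i i) hwrcf
    rw [hw_eq a i j hij,
      hcomb0 (-(a i j)) (-(a j i)) i j j i hij (Ne.symm hij)] at h
    have h2 := hdL (EE j j) a (rcf_EE j j) ha
    rw [h2, hG2' i, hG2' j] at h
    have hZoff : ∀ p q : I, p ≠ q →
        (d (EE o o) - (matMul y (EE o o) - matMul (EE o o) y)) p q = 0 :=
      fun p q hh => hG2off o p q hh
    have h3 := entry h.symm i j
    simp only [Matrix.add_apply, Matrix.sub_apply, Matrix.zero_apply,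
      matMul_diag_left hZoff, matMul_diag_right hZoff, mulEE, EEmul,
      if_pos rfl, if_neg hij, if_neg (Ne.symm hij), eq_self_iff_true, if_true] at h3
    simp only [Matrix.sub_apply] at h3 ⊢
    linear_combination -h3
  -- ### delta a is a scalar matrix ###
  have hscalar : ∀ a, IsRcf a → ∃ c : F,
      d a - (matMul y a - matMul a y) = c • IdM := by
    intro a ha
    have hdiag : ∀ p : I, p ≠ o → (d a - (matMul y a - matMul a y)) p p
        = (d a - (matMul y a - matMul a y)) o o := by
      intro p hpo
      have h := hdL (EE o p) a (rcf_EE o p) ha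
      rw [hG1 o p (Ne.symm hpo)] at h
      simp only [sub_self, matMul_zero_left, matMul_zero_right, zero_add] at h
      have h3 := entry h o p
      have h4 := hG3 (matMul (EE o p) a - matMul a (EE o p))
        (rcf_sub (rcf_mul (rcf_EE o p) ha) (rcf_mul ha (rcf_EE o p))) o p (Ne.symm hpo)
      rw [h4] at h3
      simp only [Matrix.add_apply, Matrix.sub_apply, Matrix.zero_apply, mulEE, EEmul,
        if_pos rfl, if_neg hpo, if_neg (Ne.symm hpo), eq_self_iff_true, if_true] at h3
      simp only [Matrix.sub_apply] at h3 ⊢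
      first
      | linear_combination h3
      | linear_combination -h3
    refine ⟨(d a - (matMul y a - matMul a y)) o o, ?_⟩
    funext p q
    by_cases hpq : p = q
    · subst hpq
      by_cases hpo : p = o
      · subst hpo
        simp [IdM, Matrix.smul_apply]
      · have h := hdiag p hpo
        simp only [IdM, Matrix.smul_apply, smul_eq_mul, eq_self_iff_true, if_true, mul_one]
        exact h
    · have h := hG3 a ha p q hpq
      simp only [IdM, Matrix.smul_apply, smul_eq_mul, if_neg hpq, mul_zero]
      exact h
  -- ### conclusion ###
  refine ⟨y, hyrcf, ?_⟩
  intro a ha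
  obtain ⟨u, v, hu, hv, huv⟩ := exists_commutator a ha
  obtain ⟨cu, hcu⟩ := hscalar u hu
  obtain ⟨cv, hcv⟩ := hscalar v hv
  have h := hdL u v hu hv
  rw [huv, hcu, hcv, matMul_smulIdM_left, matMul_smulIdM_right,
    matMul_smulIdM_left, matMul_smulIdM_right] at h
  simp only [sub_self, add_zero] at h
  rw [sub_eq_zero] at h
  exact h
end

section
/- Let F be a field and let V be an infinite-dimensional vector space over F. Then every F-algebra automorphism of End_F(V) is inner: for every automorphism φ of End_F(V) there exists an invertible element x ∈ End_F(V) such that φ(a) = x⁻¹ ∘ a ∘ x for all a ∈ End_F(V). -/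
open Module Submodule

/-- Over a field, any nonzero vector admits a dual functional taking value 1 on it,
and vanishing on a prescribed subspace not containing it. -/
lemma aux_dual {F V : Type*} [Field F] [AddCommGroup V] [Module F V]
    (p : Submodule F V) {v : V} (hv : v ∉ p) :
    ∃ f : V →ₗ[F] F, f v = 1 ∧ ∀ w ∈ p, f w = 0 := by
  obtain ⟨f, hf1, hf2⟩ := p.exists_dual_map_eq_bot_of_notMem hv inferInstance
  refine ⟨(f v)⁻¹ • f, by simp [inv_mul_cancel₀ hf1], fun w hw => ?_⟩
  have : f w = 0 := by
    have : f w ∈ p.map f := ⟨w, hw, rfl⟩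
    simpa [hf2] using this
  simp [this]

/-- For an infinite-dimensional vector space `V` over a field `F`, every
`F`-algebra automorphism of `End_F(V)` is inner: `φ(a) = x⁻¹ * a * x` for some
invertible `x ∈ End_F(V)`. -/
theorem stmt_16 (F V : Type*) [Field F] [AddCommGroup V] [Module F V]
    (hV : ¬ Module.Finite F V)
    (φ : Module.End F V ≃ₐ[F] Module.End F V) :
    ∃ x : (Module.End F V)ˣ, ∀ a : Module.End F V, φ a = ↑x⁻¹ * a * ↑x := by
  -- V is nontrivial
  obtain ⟨v₀, hv₀⟩ : ∃ v : V, v ≠ 0 := by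
    by_contra h
    push_neg at h
    haveI : Subsingleton V := ⟨fun a b => (h a).trans (h b).symm⟩
    exact hV inferInstance
  -- a functional with f v₀ = 1
  obtain ⟨f, hf1, -⟩ := aux_dual (⊥ : Submodule F V) (by simpa using hv₀)
  -- the rank one idempotent e
  set e : Module.End F V := f.smulRight v₀ with he
  have he_apply : ∀ v, e v = f v • v₀ := fun v => rfl
  have hev₀ : e v₀ = v₀ := by simp [he_apply, hf1]
  -- key: e * a * e = f (a v₀) • e
  have hkey : ∀ a : Module.End F V, e * a * e = f (a v₀) • e := by
    intro a
    ext v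
    simp only [Module.End.mul_apply, he_apply, LinearMap.smul_apply,
      map_smul, smul_smul]
    rw [mul_comm]
  set e' : Module.End F V := φ e with he'
  have he'_idem : e' * e' = e' := by
    rw [he', ← map_mul]
    congr 1
    have := hkey 1
    simpa [hf1] using this
  have he'_ne : e' ≠ 0 := by
    simp only [he', ne_eq, EmbeddingLike.map_eq_zero_iff]
    intro h
    apply hv₀
    rw [← hev₀, h, LinearMap.zero_apply]
  -- get w₀ with e' w₀ = w₀ ≠ 0
  obtain ⟨u, hu⟩ : ∃ u, e' u ≠ 0 := by
    by_contra h
    push_neg at h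
    exact he'_ne (LinearMap.ext h)
  set w₀ : V := e' u with hw₀
  have he'w₀ : e' w₀ = w₀ := by
    rw [hw₀, ← Module.End.mul_apply, he'_idem]
  -- key transported: e' * b * e' is a scalar multiple of e'
  have hkey' : ∀ b : Module.End F V, ∃ c : F, e' * b * e' = c • e' := by
    intro b
    refine ⟨f (φ.symm b v₀), ?_⟩
    have h2 : e' * b * e' = φ (e * φ.symm b * e) := by
      simp [he', map_mul]
    rw [h2, hkey (φ.symm b), map_smul]
  -- range of e' is spanned by w₀
  have hrange : ∀ w, ∃ c : F, e' w = c • w₀ := by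
    intro w
    by_contra hc
    push_neg at hc
    have hnmem : w₀ ∉ Submodule.span F {e' w} := by
      intro hmem
      obtain ⟨c, hcw⟩ := Submodule.mem_span_singleton.mp hmem
      have hc0 : c ≠ 0 := by
        rintro rfl
        apply hu
        rw [← he'w₀, ← hcw]
        simp
      apply hc c⁻¹
      rw [← hcw]
      simp [smul_smul, inv_mul_cancel₀ hc0]
    obtain ⟨h, hh1, hh2⟩ := aux_dual _ hnmem
    have hhw : h (e' w) = 0 := hh2 _ (Submodule.mem_span_singleton_self _)
    set b : Module.End F V := h.smulRight w₀ with hb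
    obtain ⟨c, hcb⟩ := hkey' b
    have h1 : (e' * b * e') u = c • e' u := by rw [hcb]; rfl
    have h2 : (e' * b * e') w = c • e' w := by rw [hcb]; rfl
    have h1' : (e' * b * e') u = w₀ := by
      simp only [Module.End.mul_apply, ← hw₀, hb]
      show e' (h w₀ • w₀) = w₀
      rw [hh1, one_smul, he'w₀]
    have h2' : (e' * b * e') w = 0 := by
      simp only [Module.End.mul_apply, hb]
      show e' (h (e' w) • w₀) = 0
      rw [hhw, zero_smul, map_zero]
    have hcw : w₀ = c • w₀ := by
      calc w₀ = (e' * b * e') u := h1'.symm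
        _ = c • e' u := h1
        _ = c • w₀ := by rw [← hw₀]
    have hc1 : c = 1 := by
      have hz : (1 - c) • w₀ = 0 := by
        rw [sub_smul, one_smul]
        exact sub_eq_zero.mpr hcw
      exact (sub_eq_zero.mp ((smul_eq_zero.mp hz).resolve_right hu)).symm
    apply hc 0
    rw [zero_smul]
    have : c • e' w = 0 := by rw [← h2, h2']
    rwa [hc1, one_smul] at this
  -- the intertwiner g
  set g : Module.End F V :=
    { toFun := fun v => φ (f.smulRight v) w₀
      map_add' := by
        intro v v'
        show φ (f.smulRight (v + v')) w₀ = φ (f.smulRight v) w₀ + φ (f.smulRight v') w₀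
        have : f.smulRight (v + v') = f.smulRight v + f.smulRight v' := by
          ext w; simp [smul_add]
        rw [this, map_add, LinearMap.add_apply]
      map_smul' := by
        intro c v
        show φ (f.smulRight (c • v)) w₀ = (RingHom.id F) c • φ (f.smulRight v) w₀
        have : f.smulRight (c • v) = c • f.smulRight v := by
          ext w
          simp only [LinearMap.smulRight_apply, LinearMap.smul_apply]
          rw [smul_comm]
        rw [this, map_smul, LinearMap.smul_apply, RingHom.id_apply] } with hg
  have hg_apply : ∀ v, g v = φ (f.smulRight v) w₀ := fun v => rfl
  -- intertwining property
  have hint : ∀ (a : Module.End F V) (v : V), g (a v) = φ a (g v) := by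
    intro a v
    have hmul : f.smulRight (a v) = a * f.smulRight v := by
      ext w
      simp [Module.End.mul_apply, map_smul]
    rw [hg_apply, hg_apply, hmul, map_mul]
    rfl
  have hgv₀ : g v₀ = w₀ := by
    rw [hg_apply, ← he, ← he', he'w₀]
  -- injectivity
  have hinj : Function.Injective g := by
    rw [injective_iff_map_eq_zero]
    intro v hv
    have hze : φ (f.smulRight v) * e' = 0 := by
      ext w
      obtain ⟨c, hcw⟩ := hrange w
      simp only [Module.End.mul_apply, hcw, map_smul, LinearMap.zero_apply]
      rw [show φ (f.smulRight v) w₀ = g v from rfl, hv, smul_zero]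
    rw [he', ← map_mul, ← map_zero φ] at hze
    have := φ.injective hze
    have := congrArg (fun (m : Module.End F V) => m v₀) this
    simpa [Module.End.mul_apply, hev₀, hf1] using this
  -- surjectivity
  have hsurj : Function.Surjective g := by
    intro w
    have hw₀ne : w₀ ≠ 0 := hu
    obtain ⟨h, hh1, -⟩ := aux_dual (⊥ : Submodule F V) (by simpa using hw₀ne)
    refine ⟨φ.symm (h.smulRight w) v₀, ?_⟩
    have := hint (φ.symm (h.smulRight w)) v₀
    rw [this, hgv₀]
    simp [hh1]
  -- assemble the unit
  let gE : V ≃ₗ[F] V := LinearEquiv.ofBijective g ⟨hinj, hsurj⟩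
  set u' : (Module.End F V)ˣ :=
    { val := g
      inv := (gE.symm : V →ₗ[F] V)
      val_inv := by ext v; exact gE.apply_symm_apply v
      inv_val := by ext v; exact gE.symm_apply_apply v } with hu'
  refine ⟨u'⁻¹, fun a => ?_⟩
  rw [inv_inv]
  ext v
  have h1 : (↑u' * a * ↑u'⁻¹) v = g (a (gE.symm v)) := rfl
  rw [h1, hint, show g (gE.symm v) = gE (gE.symm v) from rfl, gE.apply_symm_apply]
end
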